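/- arXiv:1709.06044 — 5 statements merged into one kernel-verified Lean document; each statement's English description precedes it below -/
import Mathlib

section
/- Let C be a binary linear code of length v spanned by the incidence matrix of a Steiner triple system on v points, with dim C = v - m where m ≥ 1. Then v has the form v = w·2^m - 1 for some integer w ≥ 1. -/
/-- A Steiner triple system given by its block family: every block has 3 points
and every pair of distinct points lies in exactly one block. -/
def isSTS {α : Type*} (B : Finset (Finset α)) : Prop :=
  (∀ b ∈ B, b.card = 3) ∧ ∀ x y : α, x ≠ y → ∃! b, b ∈ B ∧ x ∈ b ∧ y ∈ b

/-- The GF(p)-code spanned by the rows of the block-point incidence matrix. -/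
noncomputable def stsCode (p : ℕ) {α : Type*} [DecidableEq α] (B : Finset (Finset α)) :
    Submodule (ZMod p) (α → ZMod p) :=
  Submodule.span (ZMod p)
    ((fun b : Finset α => (fun x : α => if x ∈ b then (1 : ZMod p) else 0)) '' ↑B)

set_option linter.unusedSectionVars false

section Aux
open Finset

variable {α : Type*} [Fintype α] [DecidableEq α] {B : Finset (Finset α)}

lemma blocks_through (hSTS : isSTS B) (p : α) :
    Fintype.card α - 1 = 2 * (B.filter (fun b => p ∈ b)).card := by
  classical
  have hdisj : (↑(B.filter (fun b => p ∈ b)) : Set (Finset α)).PairwiseDisjoint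
      (fun b => b.erase p) := by
    intro b hb b' hb' hne
    simp only [coe_filter, Set.mem_setOf_eq] at hb hb'
    refine Finset.disjoint_left.mpr fun q hq hq' => ?_
    have hqp := Finset.ne_of_mem_erase hq
    exact hne ((hSTS.2 p q (Ne.symm hqp)).unique
      ⟨hb.1, hb.2, Finset.mem_of_mem_erase hq⟩ ⟨hb'.1, hb'.2, Finset.mem_of_mem_erase hq'⟩)
  have hunion : (B.filter (fun b => p ∈ b)).biUnion (fun b => b.erase p) = Finset.univ.erase p := by
    ext q
    simp only [mem_biUnion, mem_filter, mem_erase, mem_univ, and_true]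
    constructor
    · rintro ⟨b, ⟨-, -⟩, hq, -⟩
      exact hq
    · intro hq
      obtain ⟨b, ⟨hbB, hpb, hqb⟩, -⟩ := hSTS.2 p q (Ne.symm hq)
      exact ⟨b, ⟨hbB, hpb⟩, hq, hqb⟩
  have hcard := Finset.card_biUnion hdisj
  rw [hunion] at hcard
  have h1 : (Finset.univ.erase p).card = Fintype.card α - 1 := by
    rw [Finset.card_erase_of_mem (mem_univ p), Finset.card_univ]
  have h2 : ∑ b ∈ B.filter (fun b => p ∈ b), (b.erase p).card
      = 2 * (B.filter (fun b => p ∈ b)).card := by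
    rw [Finset.sum_congr rfl (g := fun _ => 2) (fun b hb => by
        simp only [mem_filter] at hb
        rw [Finset.card_erase_of_mem hb.2, hSTS.1 b hb.1]),
      Finset.sum_const, smul_eq_mul, mul_comm]
  omega

omit [Fintype α] in
lemma parity_lemma (x : α → ZMod 2) {b : Finset α}
    (hd : ∑ i ∈ b, x i = 0) : 2 ∣ (b.filter (fun i => x i = 1)).card := by
  have h01 : ∀ a : ZMod 2, a ≠ 0 → a = 1 := by decide
  have h : ∑ i ∈ b.filter (fun i => x i = 1), x i = ∑ i ∈ b, x i :=
    Finset.sum_filter_of_ne (fun i _ hne => h01 _ hne)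
  have h2 : ((b.filter (fun i => x i = 1)).card : ZMod 2) = 0 := by
    rw [← hd, ← h, Finset.sum_congr rfl (fun i hi => (mem_filter.mp hi).2)]
    simp
  exact (ZMod.natCast_eq_zero_iff _ 2).mp h2

lemma weight_lemma (hSTS : isSTS B) (x : α → ZMod 2) (hx : x ≠ 0)
    (hdual : ∀ b ∈ B, ∑ i ∈ b, x i = 0) :
    2 * (Finset.univ.filter (fun q => x q = 1)).card = Fintype.card α + 1 := by
  classical
  have h01 : ∀ a : ZMod 2, a ≠ 0 → a = 1 := by decide
  set S := Finset.univ.filter (fun q => x q = 1) with hS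
  obtain ⟨p, hp⟩ : ∃ p, x p = 1 := by
    obtain ⟨p, hp⟩ := Function.ne_iff.mp hx
    exact ⟨p, h01 _ hp⟩
  have hpS : p ∈ S := by simp [hS, hp]
  have hbij : (S.erase p).card = (B.filter (fun b => p ∈ b)).card := by
    refine Finset.card_bij
      (fun q hq => (hSTS.2 p q (Ne.symm (Finset.ne_of_mem_erase hq))).exists.choose) ?_ ?_ ?_
    · intro q hq
      have := (hSTS.2 p q (Ne.symm (Finset.ne_of_mem_erase hq))).exists.choose_spec
      exact mem_filter.mpr ⟨this.1, this.2.1⟩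
    · intro q hq q' hq' heq
      by_contra hne
      have h1 := (hSTS.2 p q (Ne.symm (Finset.ne_of_mem_erase hq))).exists.choose_spec
      have h2 := (hSTS.2 p q' (Ne.symm (Finset.ne_of_mem_erase hq'))).exists.choose_spec
      rw [← heq] at h2
      set b := (hSTS.2 p q (Ne.symm (Finset.ne_of_mem_erase hq))).exists.choose with hbdef
      have hqS : x q = 1 := (mem_filter.mp (Finset.mem_of_mem_erase hq)).2
      have hq'S : x q' = 1 := (mem_filter.mp (Finset.mem_of_mem_erase hq')).2
      have hsub : {p, q, q'} ⊆ b.filter (fun i => x i = 1) := by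
        intro z hz
        simp only [mem_insert, mem_singleton] at hz
        rcases hz with rfl | rfl | rfl
        · exact mem_filter.mpr ⟨h1.2.1, hp⟩
        · exact mem_filter.mpr ⟨h1.2.2, hqS⟩
        · exact mem_filter.mpr ⟨h2.2.2, hq'S⟩
      have hc3 : ({p, q, q'} : Finset α).card = 3 := by
        rw [Finset.card_insert_of_notMem, Finset.card_insert_of_notMem,
          Finset.card_singleton]
        · simp only [mem_singleton]; exact hne
        · simp only [mem_insert, mem_singleton]
          push_neg
          exact ⟨Ne.symm (Finset.ne_of_mem_erase hq), Ne.symm (Finset.ne_of_mem_erase hq')⟩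
      have hle : 3 ≤ (b.filter (fun i => x i = 1)).card := hc3 ▸ Finset.card_le_card hsub
      have hge : (b.filter (fun i => x i = 1)).card ≤ 3 := by
        calc (b.filter (fun i => x i = 1)).card ≤ b.card := Finset.card_filter_le _ _
        _ = 3 := hSTS.1 b h1.1
      obtain ⟨k, hk⟩ := parity_lemma x (hdual b h1.1)
      omega
    · intro b hb
      simp only [mem_filter] at hb
      set T := b.filter (fun i => x i = 1) with hT
      obtain ⟨k, hk⟩ := parity_lemma x (hdual b hb.1)
      rw [← hT] at hk
      have hpT : p ∈ T := mem_filter.mpr ⟨hb.2, hp⟩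
      have hTle : T.card ≤ 3 := by
        calc T.card ≤ b.card := Finset.card_filter_le _ _
        _ = 3 := hSTS.1 b hb.1
      have hT2 : T.card = 2 := by
        have : 1 ≤ T.card := Finset.card_pos.mpr ⟨p, hpT⟩
        omega
      have h1' : (T.erase p).card = 1 := by
        have := Finset.card_erase_add_one hpT
        omega
      obtain ⟨q, hq⟩ := Finset.card_eq_one.mp h1'
      have hqT : q ∈ T.erase p := hq ▸ Finset.mem_singleton_self q
      have hqne : q ≠ p := Finset.ne_of_mem_erase hqT
      have hqMem := Finset.mem_of_mem_erase hqT
      have hqb : q ∈ b := (mem_filter.mp hqMem).1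
      have hqx : x q = 1 := (mem_filter.mp hqMem).2
      have hqSe : q ∈ S.erase p :=
        Finset.mem_erase.mpr ⟨hqne, mem_filter.mpr ⟨mem_univ q, hqx⟩⟩
      refine ⟨q, hqSe, ?_⟩
      have hspec := (hSTS.2 p q (Ne.symm hqne)).exists.choose_spec
      exact (hSTS.2 p q (Ne.symm hqne)).unique hspec ⟨hb.1, hb.2, hqb⟩
  have hbt := blocks_through hSTS p
  have hcard_pos : 1 ≤ Fintype.card α := Fintype.card_pos_iff.mpr ⟨p⟩
  have hse := Finset.card_erase_add_one hpS
  omega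

lemma indicator_sum' (b : Finset α) :
    (fun x : α => if x ∈ b then (1 : ZMod 2) else 0) = ∑ i ∈ b, Pi.single i 1 := by
  funext q
  rw [Finset.sum_apply]
  simp [Pi.single_apply, Finset.sum_ite_eq' b q (fun _ => (1 : ZMod 2))]

lemma eval_indicator (x : α → ZMod 2) (b : Finset α) :
    (Pi.basisFun (ZMod 2) α).toDualEquiv x (fun q => if q ∈ b then (1 : ZMod 2) else 0)
      = ∑ i ∈ b, x i := by
  rw [indicator_sum', Module.Basis.toDualEquiv_apply, map_sum]
  refine Finset.sum_congr rfl fun i _ => ?_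
  have := Module.Basis.toDual_eq_repr (Pi.basisFun (ZMod 2) α) x i
  rw [← Pi.basisFun_apply] at *
  rw [this]
  simp

end Aux

theorem stmt0 {α : Type*} [Fintype α] [DecidableEq α] (B : Finset (Finset α))
    (hSTS : isSTS B) (m : ℕ) (hm : 1 ≤ m)
    (hdim : Module.finrank (ZMod 2) (stsCode 2 B) + m = Fintype.card α) :
    ∃ w : ℕ, 1 ≤ w ∧ Fintype.card α = w * 2 ^ m - 1 := by
  classical
  set v := Fintype.card α with hv
  set C := stsCode 2 B with hC
  set ε := (Pi.basisFun (ZMod 2) α).toDualEquiv with hε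
  set D := Submodule.comap ε.toLinearMap C.dualAnnihilator with hD
  have hmemD : ∀ x : α → ZMod 2, x ∈ D ↔ ∀ b ∈ B, ∑ i ∈ b, x i = 0 := by
    intro x
    rw [hD, Submodule.mem_comap]
    simp only [LinearEquiv.coe_coe]
    rw [Submodule.mem_dualAnnihilator]
    constructor
    · intro h b hb
      rw [← eval_indicator x b]
      exact h _ (Submodule.subset_span ⟨b, hb, rfl⟩)
    · intro h c hc
      have hle : C ≤ LinearMap.ker (ε x) := by
        rw [hC, stsCode]
        rw [Submodule.span_le]
        rintro _ ⟨b, hb, rfl⟩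
        rw [SetLike.mem_coe, LinearMap.mem_ker]
        rw [show ((ε x : Module.Dual (ZMod 2) (α → ZMod 2)) : (α → ZMod 2) →ₗ[ZMod 2] ZMod 2)
          = ε x from rfl]
        rw [eval_indicator x b]
        exact h b hb
      exact hle hc
  have hrankD : Module.finrank (ZMod 2) D = m := by
    have h1 : Module.finrank (ZMod 2) D
        = Module.finrank (ZMod 2) C.dualAnnihilator := by
      rw [hD, Submodule.comap_equiv_eq_map_symm]
      exact LinearEquiv.finrank_map_eq ε.symm _
    have h2 : Module.finrank (ZMod 2) C.dualAnnihilator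
        = Module.finrank (ZMod 2) ((α → ZMod 2) ⧸ C) := by
      rw [← (Submodule.dualQuotEquivDualAnnihilator C).finrank_eq]
      exact Subspace.dual_finrank_eq
    have h3 := Submodule.finrank_quotient_add_finrank C
    have h4 : Module.finrank (ZMod 2) (α → ZMod 2) = v := by
      simp [Module.finrank_pi, hv]
    omega
  haveI : Fintype D := Fintype.ofFinite D
  have hcardD : Fintype.card D = 2 ^ m := by
    rw [Module.card_eq_pow_finrank (K := ZMod 2) (V := D), ZMod.card, hrankD]
  set DS : Finset (α → ZMod 2) := (D : Set (α → ZMod 2)).toFinset with hDS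
  have hmemDS : ∀ x, x ∈ DS ↔ x ∈ D := by intro x; rw [hDS, Set.mem_toFinset]; rfl
  have hcardDS : DS.card = 2 ^ m := by
    rw [hDS, Set.toFinset_card, ← hcardD]
    rfl
  set N := ∑ x ∈ DS, (Finset.univ.filter (fun q => x q = 1)).card with hN
  have hzeroDS : (0 : α → ZMod 2) ∈ DS := (hmemDS 0).mpr (zero_mem D)
  have h2m : 2 ≤ 2 ^ m := by
    calc 2 = 2 ^ 1 := (pow_one 2).symm
    _ ≤ 2 ^ m := Nat.pow_le_pow_right (by norm_num) hm
  have hNa : 2 * N = (2 ^ m - 1) * (v + 1) := by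
    have hwt : ∀ x ∈ DS.erase 0,
        2 * (Finset.univ.filter (fun q => x q = 1)).card = v + 1 := fun x hx =>
      weight_lemma hSTS x (Finset.ne_of_mem_erase hx)
        (fun b hb => (hmemD x).mp ((hmemDS x).mp (Finset.mem_of_mem_erase hx)) b hb)
    have h0 : 2 * (Finset.univ.filter (fun q => (0 : α → ZMod 2) q = 1)).card = 0 := by
      simp
    calc 2 * N = ∑ x ∈ DS, 2 * (Finset.univ.filter (fun q => x q = 1)).card := by
          rw [hN, Finset.mul_sum]
      _ = 2 * (Finset.univ.filter (fun q => (0 : α → ZMod 2) q = 1)).card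
          + ∑ x ∈ DS.erase 0, 2 * (Finset.univ.filter (fun q => x q = 1)).card :=
          (Finset.add_sum_erase _ _ hzeroDS).symm
      _ = ∑ x ∈ DS.erase 0, (v + 1) := by
          rw [h0, zero_add, Finset.sum_congr rfl hwt]
      _ = (2 ^ m - 1) * (v + 1) := by
          rw [Finset.sum_const, smul_eq_mul, Finset.card_erase_of_mem hzeroDS, hcardDS]
  have hNb : 2 * N = ∑ p : α, 2 * (DS.filter (fun x => x p = 1)).card := by
    have hswap : N = ∑ p : α, (DS.filter (fun x => x p = 1)).card := by
      rw [hN]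
      simp_rw [Finset.card_filter]
      exact Finset.sum_comm
    rw [hswap, Finset.mul_sum]
  have hcol : ∀ p : α, 2 ^ m ∣ 2 * (DS.filter (fun x => x p = 1)).card := by
    intro p
    have haa : ∀ a : ZMod 2, a + a = 0 := by decide
    by_cases hex : ∃ x0 ∈ DS, x0 p = 1
    · obtain ⟨x0, hx0DS, hx0p⟩ := hex
      have hx0D : x0 ∈ D := (hmemDS x0).mp hx0DS
      have hadd : ∀ x : α → ZMod 2, x + x0 + x0 = x := by
        intro x
        rw [add_assoc]
        funext q
        simp [haa (x0 q)]
      have hbij : (DS.filter (fun x => x p = 1)).card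
          = (DS.filter (fun x => x p = 0)).card := by
        refine Finset.card_bij' (fun x _ => x + x0) (fun x _ => x + x0) ?_ ?_ ?_ ?_
        · intro x hx
          simp only [Finset.mem_filter] at hx ⊢
          refine ⟨(hmemDS _).mpr (add_mem ((hmemDS x).mp hx.1) hx0D), ?_⟩
          show x p + x0 p = 0
          rw [hx.2, hx0p]
          decide
        · intro x hx
          simp only [Finset.mem_filter] at hx ⊢
          refine ⟨(hmemDS _).mpr (add_mem ((hmemDS x).mp hx.1) hx0D), ?_⟩
          show x p + x0 p = 1
          rw [hx.2, hx0p]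
          decide
        · intro x _; exact hadd x
        · intro x _; exact hadd x
      have hcover : (DS.filter (fun x => x p = 1)).card
          + (DS.filter (fun x => x p = 0)).card = 2 ^ m := by
        rw [← hcardDS]
        have : (DS.filter (fun x => x p = 0)) = (DS.filter (fun x => ¬ x p = 1)) := by
          apply Finset.filter_congr
          intro x _
          have : ∀ a : ZMod 2, a = 0 ↔ ¬ a = 1 := by decide
          exact this _
        rw [this]
        exact Finset.card_filter_add_card_filter_not _
      refine ⟨1, ?_⟩
      rw [mul_one, ← hcover, two_mul, hbij]
    · push_neg at hex
      have : DS.filter (fun x => x p = 1) = ∅ := Finset.filter_eq_empty_iff.mpr hex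
      simp [this]
  have hdvd : 2 ^ m ∣ (2 ^ m - 1) * (v + 1) := by
    rw [← hNa, hNb]
    exact Finset.dvd_sum fun p _ => hcol p
  have hcop : Nat.Coprime (2 ^ m) (2 ^ m - 1) := by
    have h1 : 2 ^ m - 1 + 1 = 2 ^ m := by clear * - h2m; omega
    rw [← h1]
    simp
  obtain ⟨w, hw⟩ := hcop.dvd_of_dvd_mul_left hdvd
  have hw' : v + 1 = w * 2 ^ m := by rw [hw, mul_comm]
  refine ⟨w, ?_, Nat.eq_sub_of_add_eq hw'⟩
  rcases Nat.eq_zero_or_pos w with h0 | h1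
  · rw [h0, zero_mul] at hw'
    exact absurd hw' (by simp)
  · exact h1
end

section
/- If C is the binary code spanned by the incidence matrix of a Steiner triple system on v points with 2-rank v - m (m ≥ 1), then every nonzero codeword of the dual code C⊥ has weight exactly (v+1)/2. -/
theorem stmt1 {α : Type*} [Fintype α] [DecidableEq α] (B : Finset (Finset α))
    (hSTS : isSTS B) (m : ℕ) (hm : 1 ≤ m)
    (hdim : Module.finrank (ZMod 2) (stsCode 2 B) + m = Fintype.card α)
    (c : α → ZMod 2) (hc : ∀ b ∈ B, ∑ x ∈ b, c x = 0) (hne : c ≠ 0) :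
    2 * (Finset.univ.filter fun x => c x ≠ 0).card = Fintype.card α + 1 := by
  classical
  obtain ⟨x, hx⟩ : ∃ x, c x ≠ 0 := by
    by_contra h; push_neg at h; exact hne (funext fun x => h x)
  set S : Finset α := Finset.univ.filter (fun z => c z ≠ 0) with hSdef
  set T : Finset (Finset α) := B.filter (fun b => x ∈ b) with hTdef
  have hzmod : ∀ a : ZMod 2, a = 0 ∨ a = 1 := by decide
  -- every block through x meets S in exactly 2 points
  have key : ∀ b ∈ B, x ∈ b → (b.filter fun z => c z ≠ 0).card = 2 := by
    intro b hb hxb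
    have h3 := hSTS.1 b hb
    have hsum : ((b.filter fun z => c z ≠ 0).card : ZMod 2) = 0 := by
      have heq : ((b.filter fun z => c z ≠ 0).card : ZMod 2) = ∑ z ∈ b, c z := by
        rw [Finset.card_filter]
        push_cast
        refine Finset.sum_congr rfl fun z _ => ?_
        rcases hzmod (c z) with h | h <;> simp [h]
      rw [heq, hc b hb]
    have hdvd : (2 : ℕ) ∣ (b.filter fun z => c z ≠ 0).card :=
      (ZMod.natCast_eq_zero_iff _ 2).mp hsum
    have hle : (b.filter fun z => c z ≠ 0).card ≤ 3 :=
      h3 ▸ Finset.card_filter_le b _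
    have hge : 1 ≤ (b.filter fun z => c z ≠ 0).card :=
      Finset.card_pos.mpr ⟨x, Finset.mem_filter.mpr ⟨hxb, hx⟩⟩
    omega
  -- bijection between S.erase x and T
  have hbij : (S.erase x).card = T.card := by
    refine Finset.card_bij
      (fun a ha => ((hSTS.2 x a (Finset.ne_of_mem_erase ha).symm).exists).choose)
      ?_ ?_ ?_
    · intro a ha
      obtain ⟨hb, hxb, hab⟩ :=
        ((hSTS.2 x a (Finset.ne_of_mem_erase ha).symm).exists).choose_spec
      exact Finset.mem_filter.mpr ⟨hb, hxb⟩
    · intro a₁ ha₁ a₂ ha₂ heq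
      obtain ⟨hb₁, hxb₁, hab₁⟩ :=
        ((hSTS.2 x a₁ (Finset.ne_of_mem_erase ha₁).symm).exists).choose_spec
      obtain ⟨hb₂, hxb₂, hab₂⟩ :=
        ((hSTS.2 x a₂ (Finset.ne_of_mem_erase ha₂).symm).exists).choose_spec
      by_contra hne12
      -- block contains x, a₁, a₂ distinct, all in support: contradiction with key
      set b := ((hSTS.2 x a₁ (Finset.ne_of_mem_erase ha₁).symm).exists).choose with hbdef
      beta_reduce at heq
      have hc1 : c a₁ ≠ 0 := (Finset.mem_filter.mp (Finset.mem_of_mem_erase ha₁)).2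
      have hc2 : c a₂ ≠ 0 := (Finset.mem_filter.mp (Finset.mem_of_mem_erase ha₂)).2
      have hsub : ({x, a₁, a₂} : Finset α) ⊆ b.filter fun z => c z ≠ 0 := by
        intro z hz
        simp only [Finset.mem_insert, Finset.mem_singleton] at hz
        rcases hz with rfl | rfl | rfl
        · exact Finset.mem_filter.mpr ⟨hxb₁, hx⟩
        · exact Finset.mem_filter.mpr ⟨hab₁, hc1⟩
        · refine Finset.mem_filter.mpr ⟨?_, hc2⟩
          exact heq ▸ hab₂
      have hcard3 : ({x, a₁, a₂} : Finset α).card = 3 := by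
        rw [Finset.card_insert_of_notMem, Finset.card_insert_of_notMem,
          Finset.card_singleton]
        · simp [hne12]
        · simp only [Finset.mem_insert, Finset.mem_singleton]
          push_neg
          exact ⟨(Finset.ne_of_mem_erase ha₁).symm, (Finset.ne_of_mem_erase ha₂).symm⟩
      have := Finset.card_le_card hsub
      rw [hcard3, key b hb₁ hxb₁] at this
      omega
    · intro b hb
      obtain ⟨hbB, hxb⟩ := Finset.mem_filter.mp hb
      have h2 := key b hbB hxb
      obtain ⟨a, ha, hax⟩ : ∃ a ∈ b.filter fun z => c z ≠ 0, a ≠ x := by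
        have : 0 < ((b.filter fun z => c z ≠ 0).erase x).card := by
          rw [Finset.card_erase_of_mem (Finset.mem_filter.mpr ⟨hxb, hx⟩), h2]
          omega
        obtain ⟨a, ha⟩ := Finset.card_pos.mp this
        exact ⟨a, Finset.mem_of_mem_erase ha, Finset.ne_of_mem_erase ha⟩
      obtain ⟨hab, hca⟩ := Finset.mem_filter.mp ha
      have haS : a ∈ S.erase x :=
        Finset.mem_erase.mpr ⟨hax, Finset.mem_filter.mpr ⟨Finset.mem_univ a, hca⟩⟩
      refine ⟨a, haS, ?_⟩
      obtain ⟨hb', hxb', hab'⟩ :=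
        ((hSTS.2 x a hax.symm).exists).choose_spec
      exact ((hSTS.2 x a hax.symm).unique ⟨hb', hxb', hab'⟩ ⟨hbB, hxb, hab⟩)
  -- blocks through x partition the other points into pairs
  have hpart : (Finset.univ.erase x) = T.biUnion (fun b => b.erase x) := by
    ext z
    simp only [Finset.mem_erase, Finset.mem_univ, and_true, Finset.mem_biUnion]
    constructor
    · intro hz
      obtain ⟨b, hbB, hxb, hzb⟩ := (hSTS.2 x z (Ne.symm hz)).exists
      exact ⟨b, Finset.mem_filter.mpr ⟨hbB, hxb⟩, hz, hzb⟩
    · rintro ⟨b, -, hz, -⟩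
      exact hz
  have hdisj : ∀ b₁ ∈ T, ∀ b₂ ∈ T, b₁ ≠ b₂ → Disjoint (b₁.erase x) (b₂.erase x) := by
    intro b₁ hb₁ b₂ hb₂ hne12
    simp only [hTdef, Finset.mem_filter] at hb₁ hb₂
    rw [Finset.disjoint_left]
    intro z hz1 hz2
    rw [Finset.mem_erase] at hz1 hz2
    exact hne12 ((hSTS.2 x z (Ne.symm hz1.1)).unique ⟨hb₁.1, hb₁.2, hz1.2⟩
      ⟨hb₂.1, hb₂.2, hz2.2⟩)
  have hcount : Fintype.card α - 1 = 2 * T.card := by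
    have h1 : (Finset.univ.erase x).card = Fintype.card α - 1 := by
      rw [Finset.card_erase_of_mem (Finset.mem_univ x), Finset.card_univ]
    have h2 : (T.biUnion (fun b => b.erase x)).card = ∑ b ∈ T, (b.erase x).card :=
      Finset.card_biUnion hdisj
    have h3 : ∑ b ∈ T, (b.erase x).card = 2 * T.card := by
      rw [Finset.sum_congr rfl (fun b hb => ?_), Finset.sum_const, smul_eq_mul,
        mul_comm]
      obtain ⟨hbB, hxb⟩ := Finset.mem_filter.mp hb
      rw [Finset.card_erase_of_mem hxb, hSTS.1 b hbB]
    rw [← h1, hpart, h2, h3]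
  have hxS : x ∈ S := Finset.mem_filter.mpr ⟨Finset.mem_univ x, hx⟩
  have hScard : S.card = T.card + 1 := by
    have := Finset.card_erase_of_mem hxS
    have hpos : 1 ≤ S.card := Finset.card_pos.mpr ⟨x, hxS⟩
    omega
  have hvpos : 1 ≤ Fintype.card α := Fintype.card_pos_iff.mpr ⟨x⟩
  show 2 * S.card = Fintype.card α + 1
  omega
end

section
/- The 2-rank of any Steiner triple system on 2^n - 1 points is at least 2^n - 1 - n. -/
open Finset



/-- incidence matrix -/
def stsMat {α : Type*} [DecidableEq α] (B : Finset (Finset α)) :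
    Matrix {b // b ∈ B} α (ZMod 2) :=
  fun i x => if x ∈ i.1 then 1 else 0

lemma stsCode_eq_span {α : Type*} [DecidableEq α] (B : Finset (Finset α)) :
    stsCode 2 B = Submodule.span (ZMod 2) (Set.range (stsMat B)) := by
  unfold stsCode stsMat
  congr 1
  ext g
  constructor
  · rintro ⟨b, hb, rfl⟩; exact ⟨⟨b, hb⟩, rfl⟩
  · rintro ⟨⟨b, hb⟩, rfl⟩; exact ⟨b, hb, rfl⟩

lemma mem_ker_iff {α : Type*} [Fintype α] [DecidableEq α] (B : Finset (Finset α))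
    (g : α → ZMod 2) :
    g ∈ LinearMap.ker (stsMat B).mulVecLin ↔ ∀ b ∈ B, ∑ x ∈ b, g x = 0 := by
  simp only [LinearMap.mem_ker, Matrix.mulVecLin_apply, funext_iff, Matrix.mulVec,
    dotProduct, stsMat, ite_mul, one_mul, zero_mul, Finset.sum_ite_mem,
    Finset.univ_inter, Pi.zero_apply]
  exact ⟨fun h b hb => h ⟨b, hb⟩, fun h i => h i.1 i.2⟩

lemma rank_add {α : Type*} [Fintype α] [DecidableEq α] (B : Finset (Finset α)) :
    Module.finrank (ZMod 2) (stsCode 2 B)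
      + Module.finrank (ZMod 2) (LinearMap.ker (stsMat B).mulVecLin)
      = Fintype.card α := by
  have h1 : Module.finrank (ZMod 2) (stsCode 2 B) = (stsMat B).rank := by
    rw [stsCode_eq_span, Matrix.rank_eq_finrank_span_row]
    rfl
  have h2 := LinearMap.finrank_range_add_finrank_ker ((stsMat B).mulVecLin)
  rw [h1, Matrix.rank, h2, Module.finrank_pi]



lemma exists_third {α : Type*} [DecidableEq α] {b : Finset α} (hb : b.card = 3) {x y : α}
    (hx : x ∈ b) (hy : y ∈ b) (hxy : x ≠ y) :
    ∃ z, z ≠ x ∧ z ≠ y ∧ b = {x, y, z} := by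
  have hy' : y ∈ b.erase x := mem_erase.mpr ⟨hxy.symm, hy⟩
  have h1 : ((b.erase x).erase y).card = 1 := by
    rw [card_erase_of_mem hy', card_erase_of_mem hx, hb]
  obtain ⟨z, hz⟩ := card_eq_one.mp h1
  have hzmem : z ∈ (b.erase x).erase y := hz ▸ mem_singleton_self z
  obtain ⟨hzy, hzx', hzb⟩ : z ≠ y ∧ z ≠ x ∧ z ∈ b := by
    rcases mem_erase.mp hzmem with ⟨h1', h2'⟩
    rcases mem_erase.mp h2' with ⟨h3', h4'⟩
    exact ⟨h1', h3', h4'⟩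
  refine ⟨z, hzx', hzy, ?_⟩
  have hsub : ({x, y, z} : Finset α) ⊆ b := by
    intro t ht
    simp only [mem_insert, mem_singleton] at ht
    rcases ht with rfl | rfl | rfl <;> assumption
  have hc : ({x, y, z} : Finset α).card = 3 := by
    rw [card_insert_of_notMem (by simp [hxy, (Ne.symm hzx')]),
      card_insert_of_notMem (by simp [Ne.symm hzy]), card_singleton]
  exact (eq_of_subset_of_card_le hsub (by rw [hc, hb])).symm

lemma support_card {α : Type*} [Fintype α] [DecidableEq α] {B : Finset (Finset α)}
    (hSTS : isSTS B) (g : α → ZMod 2)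
    (hg : ∀ b ∈ B, ∑ x ∈ b, g x = 0) (hg0 : g ≠ 0) :
    2 * (univ.filter (fun x => ¬ g x = 0)).card = Fintype.card α + 1 := by
  classical
  obtain ⟨hcard3, hpair⟩ := hSTS
  have zmod2 : ∀ a : ZMod 2, a = 0 ∨ a = 1 := by decide
  obtain ⟨x0, hx0⟩ : ∃ x, g x ≠ 0 := by
    by_contra h
    push_neg at h
    exact hg0 (funext fun x => h x)
  have hx0' : g x0 = 1 := (zmod2 (g x0)).resolve_left hx0
  have hblk : ∀ y : α, y ≠ x0 → ∃ z, z ≠ x0 ∧ z ≠ y ∧ {x0, y, z} ∈ B ∧ g x0 + g y + g z = 0 := by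
    intro y hy
    obtain ⟨b, ⟨hbB, hxb, hyb⟩, _⟩ := hpair x0 y hy.symm
    obtain ⟨z, hzx, hzy, hbz⟩ := exists_third (hcard3 b hbB) hxb hyb hy.symm
    refine ⟨z, hzx, hzy, hbz ▸ hbB, ?_⟩
    have hsum := hg b hbB
    rw [hbz] at hsum
    rwa [sum_insert (by simp [hy.symm, Ne.symm hzx]),
      sum_insert (by simp [Ne.symm hzy]), sum_singleton, ← add_assoc] at hsum
  choose f hf1 hf2 hfB hfsum using hblk
  have hinv : ∀ y (hy : y ≠ x0), f (f y hy) (hf1 y hy) = y := by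
    intro y hy
    have h1 : ({x0, y, f y hy} : Finset α) ∈ B := hfB y hy
    have h2 : ({x0, f y hy, f (f y hy) (hf1 y hy)} : Finset α) ∈ B := hfB _ (hf1 y hy)
    have heq : ({x0, y, f y hy} : Finset α) = {x0, f y hy, f (f y hy) (hf1 y hy)} :=
      (hpair x0 (f y hy) (Ne.symm (hf1 y hy))).unique ⟨h1, by simp, by simp⟩ ⟨h2, by simp, by simp⟩
    have hymem : y ∈ ({x0, f y hy, f (f y hy) (hf1 y hy)} : Finset α) := by
      rw [← heq]; simp
    simp only [mem_insert, mem_singleton] at hymem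
    rcases hymem with h | h | h
    · exact absurd h hy
    · exact absurd h.symm (hf2 y hy)
    · exact h.symm
  set S : Finset α := univ.filter (fun x => ¬ g x = 0) with hS
  set T : Finset α := univ.filter (fun x => g x = 0) with hT
  have hx0S : x0 ∈ S := by simp [hS, hx0]
  have hST : T.card + S.card = Fintype.card α := by
    rw [hS, hT, Finset.card_filter_add_card_filter_not, card_univ]
  have key : (S.erase x0).card = T.card := by
    have hi : ∀ y (hy : y ∈ S.erase x0), f y (mem_erase.mp hy).1 ∈ T := by
      intro y hy
      obtain ⟨hyx, hyS⟩ := mem_erase.mp hy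
      have hy1 : g y = 1 := (zmod2 _).resolve_left (mem_filter.mp hyS).2
      have h := hfsum y hyx
      rw [hx0', hy1] at h
      have hz0 : g (f y hyx) = 0 := by
        have h11 : (1 : ZMod 2) + 1 = 0 := by decide
        rwa [h11, zero_add] at h
      exact mem_filter.mpr ⟨mem_univ _, hz0⟩
    have hj : ∀ z (hz : z ∈ T), f z (fun h => hx0 (h ▸ (mem_filter.mp hz).2)) ∈ S.erase x0 := by
      intro z hz
      have hzx : z ≠ x0 := fun h => hx0 (h ▸ (mem_filter.mp hz).2)
      have hz0 : g z = 0 := (mem_filter.mp hz).2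
      have h := hfsum z hzx
      rw [hx0', hz0, add_zero] at h
      have hw1 : ¬ g (f z hzx) = 0 := by
        intro h0
        rw [h0, add_zero] at h
        exact one_ne_zero h
      exact mem_erase.mpr ⟨hf1 z hzx, mem_filter.mpr ⟨mem_univ _, hw1⟩⟩
    exact card_bij' (fun y hy => f y (mem_erase.mp hy).1)
      (fun z hz => f z (fun h => hx0 (h ▸ (mem_filter.mp hz).2)))
      hi hj (fun y hy => hinv y (mem_erase.mp hy).1)
      (fun z hz => hinv z _)
  have h1 : (S.erase x0).card = S.card - 1 := card_erase_of_mem hx0S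
  have h2 : 1 ≤ S.card := card_pos.mpr ⟨x0, hx0S⟩
  omega



lemma pow_bound (k n : ℕ) (h : (2 ^ k - 1) * 2 ^ n ≤ (2 ^ n - 1) * 2 ^ k) : k ≤ n := by
  by_contra hkn
  push_neg at hkn
  have h2 : 2 ^ n < 2 ^ k := Nat.pow_lt_pow_right one_lt_two hkn
  have e1 : (2 ^ k - 1) * 2 ^ n = 2 ^ (k + n) - 2 ^ n := by
    rw [Nat.sub_mul, one_mul, ← pow_add]
  have e2 : (2 ^ n - 1) * 2 ^ k = 2 ^ (k + n) - 2 ^ k := by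
    rw [Nat.sub_mul, one_mul, ← pow_add, add_comm]
  have h3 : 2 ^ n ≤ 2 ^ (k + n) := Nat.pow_le_pow_right (by norm_num) (by omega)
  have h4 : 2 ^ k ≤ 2 ^ (k + n) := Nat.pow_le_pow_right (by norm_num) (by omega)
  omega

lemma dim_bound {α : Type*} [Fintype α] [DecidableEq α] (W : Submodule (ZMod 2) (α → ZMod 2))
    (n : ℕ) (hv : Fintype.card α = 2 ^ n - 1)
    (hwt : ∀ g ∈ W, g ≠ 0 →
      2 * (univ.filter (fun x => ¬ g x = 0)).card = Fintype.card α + 1) :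
    Module.finrank (ZMod 2) W ≤ n := by
  classical
  set k := Module.finrank (ZMod 2) W with hk
  have hcardW : Fintype.card W = 2 ^ k := by
    have := Module.card_eq_pow_finrank (K := ZMod 2) (V := W)
    rwa [ZMod.card] at this
  set WF : Finset (α → ZMod 2) := univ.filter (fun g => g ∈ W) with hWF
  have hWFcard : WF.card = 2 ^ k := by
    rw [← hcardW, hWF, ← Fintype.card_subtype]
  have hvp : Fintype.card α + 1 = 2 ^ n := by
    have : 1 ≤ 2 ^ n := Nat.one_le_two_pow
    omega
  have h0W : (0 : α → ZMod 2) ∈ WF := mem_filter.mpr ⟨mem_univ _, W.zero_mem⟩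
  -- left side: total weight
  have hL : 2 * ∑ g ∈ WF, (univ.filter (fun x => ¬ g x = 0)).card
      = (WF.card - 1) * 2 ^ n := by
    rw [Finset.mul_sum, ← Finset.sum_erase_add _ _ h0W]
    have hz : 2 * (univ.filter (fun x : α => ¬ (0 : α → ZMod 2) x = 0)).card = 0 := by
      simp
    rw [hz, add_zero]
    rw [Finset.sum_congr rfl (fun g hg => ?_), Finset.sum_const, smul_eq_mul,
      card_erase_of_mem h0W]
    obtain ⟨hg0, hgWF⟩ := mem_erase.mp hg
    rw [hwt g (mem_filter.mp hgWF).2 hg0, hvp]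
  -- per-coordinate bound
  have hx : ∀ x : α, 2 * (WF.filter (fun g => ¬ g x = 0)).card ≤ WF.card := by
    intro x
    set A := WF.filter (fun g => ¬ g x = 0) with hA
    by_cases hAe : A = ∅
    · simp [hAe]
    obtain ⟨g0, hg0⟩ := Finset.nonempty_iff_ne_empty.mpr hAe
    have hg0W : g0 ∈ W := (mem_filter.mp (mem_filter.mp hg0).1).2
    have hg0x : g0 x = 1 := by
      have := (mem_filter.mp hg0).2
      rcases (by decide : ∀ a : ZMod 2, a = 0 ∨ a = 1) (g0 x) with h | h
      · exact absurd h this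
      · exact h
    have hinj : Set.InjOn (fun g => g + g0) A := by
      intro a _ b _ hab
      exact add_right_cancel hab
    have hmaps : ∀ g ∈ A, g + g0 ∈ WF \ A := by
      intro g hg
      have hgW : g ∈ W := (mem_filter.mp (mem_filter.mp hg).1).2
      have hgx : g x = 1 := by
        have := (mem_filter.mp hg).2
        rcases (by decide : ∀ a : ZMod 2, a = 0 ∨ a = 1) (g x) with h | h
        · exact absurd h this
        · exact h
      have h1 : g + g0 ∈ WF := mem_filter.mpr ⟨mem_univ _, W.add_mem hgW hg0W⟩
      have h2 : (g + g0) x = 0 := by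
        show g x + g0 x = 0
        rw [hgx, hg0x]; decide
      refine mem_sdiff.mpr ⟨h1, fun hmem => ?_⟩
      exact (mem_filter.mp hmem).2 h2
    have hcard : A.card ≤ (WF \ A).card := Finset.card_le_card_of_injOn (fun g => g + g0) hmaps hinj
    have hsd : (WF \ A).card = WF.card - A.card :=
      Finset.card_sdiff_of_subset (filter_subset _ _)
    have hAle : A.card ≤ WF.card := Finset.card_le_card (filter_subset _ _)
    calc 2 * A.card = A.card + A.card := two_mul _
      _ ≤ A.card + (WF \ A).card := Nat.add_le_add_left hcard _
      _ = A.card + (WF.card - A.card) := by rw [hsd]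
      _ = WF.card := Nat.add_sub_cancel' hAle
  -- swap sums
  have hswap : ∑ g ∈ WF, (univ.filter (fun x => ¬ g x = 0)).card
      = ∑ x : α, (WF.filter (fun g => ¬ g x = 0)).card := by
    simp only [Finset.card_filter]
    exact Finset.sum_comm
  have hineq : (2 ^ k - 1) * 2 ^ n ≤ (2 ^ n - 1) * 2 ^ k := by
    have h1 : 2 * ∑ x : α, (WF.filter (fun g => ¬ g x = 0)).card
        ≤ Fintype.card α * WF.card := by
      rw [Finset.mul_sum]
      calc ∑ x : α, 2 * (WF.filter (fun g => ¬ g x = 0)).card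
          ≤ ∑ _x : α, WF.card := Finset.sum_le_sum (fun x _ => hx x)
        _ = Fintype.card α * WF.card := by rw [Finset.sum_const, smul_eq_mul, card_univ]
    rw [← hswap] at h1
    rw [hL, hWFcard] at h1
    calc (2 ^ k - 1) * 2 ^ n ≤ Fintype.card α * 2 ^ k := h1
      _ = (2 ^ n - 1) * 2 ^ k := by rw [hv]
  exact pow_bound k n hineq

theorem stmt2 {α : Type*} [Fintype α] [DecidableEq α] (B : Finset (Finset α))
    (hSTS : isSTS B) (n : ℕ) (hv : Fintype.card α = 2 ^ n - 1) :
    2 ^ n - 1 - n ≤ Module.finrank (ZMod 2) (stsCode 2 B) := by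
  classical
  have hra := rank_add B
  have hdim : Module.finrank (ZMod 2) (LinearMap.ker (stsMat B).mulVecLin) ≤ n :=
    dim_bound _ n hv
      (fun g hgW hg0 => support_card hSTS g ((mem_ker_iff B g).mp hgW) hg0)
  rw [hv] at hra
  omega
end

section
/- The number of distinct Steiner triple systems on 2^n - 1 points contained in the binary code with parity check matrix H_{n,1} equals 2^{(2^{n-1}-1)(2^{n-2}-1)/3}. -/
abbrev binIdx (n t : ℕ) :=
  Fin (2 ^ t - 1) ⊕ ({p : Fin (n - t) → ZMod 2 // p ≠ 0} × Fin (2 ^ t))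

def binCol {n t : ℕ} : binIdx n t → (Fin (n - t) → ZMod 2) :=
  Sum.elim (fun _ => 0) (fun q => q.1.1)

open Finset
open scoped Classical

namespace STS8

variable {n : ℕ}

abbrev W (n : ℕ) := Fin (n - 1) → ZMod 2
abbrev Vec (n : ℕ) := {p : W n // p ≠ 0}
abbrev Pt (n : ℕ) := binIdx n 1

def z : Pt n := Sum.inl ⟨0, by norm_num⟩
def pt (P : Vec n) (i : Fin 2) : Pt n := Sum.inr (P, i)

def ι (i : Fin 2) : ZMod 2 := if i = 0 then 0 else 1
def τ (x : ZMod 2) : Fin 2 := if x = 0 then 0 else 1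

def idx : Pt n → ZMod 2 := Sum.elim (fun _ => 0) (fun q => if q.2 = (0 : Fin (2^1)) then 0 else 1)

lemma idx_z : idx (z : Pt n) = 0 := rfl
lemma idx_pt (P : Vec n) (i : Fin 2) : idx (pt P i) = ι i := by
  fin_cases i <;> rfl
lemma binCol_z : binCol (z : Pt n) = 0 := rfl
lemma binCol_pt (P : Vec n) (i : Fin 2) : binCol (pt P i) = P.1 := rfl

lemma pt_inj {P Q : Vec n} {i j : Fin 2} (h : pt P i = pt Q j) : P = Q ∧ i = j := by
  simpa [pt, Sum.inr.injEq, Prod.ext_iff] using h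

lemma pt_ne_z (P : Vec n) (i : Fin 2) : pt P i ≠ z := by simp [pt, z]

lemma pt_cases (x : Pt n) : x = z ∨ ∃ P i, x = pt P i := by
  rcases x with a | ⟨P, i⟩
  · left
    have h := a.isLt
    have h1 : (2:ℕ)^1 - 1 = 1 := by norm_num
    have : a = ⟨0, by norm_num⟩ := Fin.ext (by omega)
    simp [z, this]
  · exact Or.inr ⟨P, i, rfl⟩


def Tb (P : Vec n) : Finset (Pt n) := {z, pt P 0, pt P 1}
def Cb (P Q R : Vec n) (i j k : Fin 2) : Finset (Pt n) := {pt P i, pt Q j, pt R k}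

def idxSum (b : Finset (Pt n)) : ZMod 2 := ∑ a ∈ b, idx a
def colSum (b : Finset (Pt n)) : W n := ∑ a ∈ b, binCol a
def vset (b : Finset (Pt n)) : Finset (W n) := b.image binCol

lemma sum_triple {α M : Type*} [DecidableEq α] [AddCommMonoid M] (f : α → M)
    {x y w : α} (hxy : x ≠ y) (hxw : x ≠ w) (hyw : y ≠ w) :
    ∑ a ∈ ({x, y, w} : Finset α), f a = f x + f y + f w := by
  rw [Finset.sum_insert (by simp [hxy, hxw]), Finset.sum_insert (by simp [hyw]),
    Finset.sum_singleton, add_assoc]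

lemma card_triple {α : Type*} [DecidableEq α]
    {x y w : α} (hxy : x ≠ y) (hxw : x ≠ w) (hyw : y ≠ w) :
    ({x, y, w} : Finset α).card = 3 := by
  rw [Finset.card_insert_of_notMem (by simp [hxy, hxw]),
    Finset.card_insert_of_notMem (by simp [hyw]), Finset.card_singleton]

lemma zmod2_add_self : ∀ x : ZMod 2, x + x = 0 := by decide

lemma w_add_self (x : W n) : x + x = 0 := by
  funext i; exact zmod2_add_self (x i)

lemma card_Tb (P : Vec n) : (Tb P).card = 3 :=
  card_triple (Ne.symm (pt_ne_z P 0)) (Ne.symm (pt_ne_z P 1))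
    (fun h => by simpa using (pt_inj h).2)

lemma colSum_Tb (P : Vec n) : colSum (Tb P) = 0 := by
  rw [colSum, Tb, sum_triple binCol (Ne.symm (pt_ne_z P 0)) (Ne.symm (pt_ne_z P 1))
    (fun h => by simpa using (pt_inj h).2)]
  simp [binCol_z, binCol_pt, w_add_self]

lemma mem_Tb {x : Pt n} {P : Vec n} : x ∈ Tb P ↔ x = z ∨ x = pt P 0 ∨ x = pt P 1 := by
  simp [Tb]

section cross
variable {P Q R : Vec n} {i j k : Fin 2}
variable (hPQ : P ≠ Q) (hPR : P ≠ R) (hQR : Q ≠ R)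

lemma mem_Cb {x : Pt n} : x ∈ Cb P Q R i j k ↔ x = pt P i ∨ x = pt Q j ∨ x = pt R k := by
  simp [Cb]

include hPQ hPR hQR

lemma card_Cb : (Cb P Q R i j k).card = 3 :=
  card_triple (fun h => hPQ (pt_inj h).1) (fun h => hPR (pt_inj h).1)
    (fun h => hQR (pt_inj h).1)

lemma colSum_Cb : colSum (Cb P Q R i j k) = P.1 + Q.1 + R.1 := by
  rw [colSum, Cb, sum_triple binCol (fun h => hPQ (pt_inj h).1) (fun h => hPR (pt_inj h).1)
    (fun h => hQR (pt_inj h).1)]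
  simp [binCol_pt]

lemma idxSum_Cb : idxSum (Cb P Q R i j k) = ι i + ι j + ι k := by
  rw [idxSum, Cb, sum_triple idx (fun h => hPQ (pt_inj h).1) (fun h => hPR (pt_inj h).1)
    (fun h => hQR (pt_inj h).1)]
  simp [idx_pt]

omit hPQ hPR hQR in
lemma vset_Cb : vset (Cb P Q R i j k) = {P.1, Q.1, R.1} := by
  simp [vset, Cb, Finset.image_insert, binCol_pt]

omit hPQ hPR hQR in
lemma zfree_Cb : z ∉ Cb P Q R i j k := by
  simp [mem_Cb]
  exact ⟨Ne.symm (pt_ne_z P i), Ne.symm (pt_ne_z Q j), Ne.symm (pt_ne_z R k)⟩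

end cross

lemma third_elt {α : Type*} [DecidableEq α] {b : Finset α} {x y : α}
    (hb : b.card = 3) (hx : x ∈ b) (hy : y ∈ b) (hxy : x ≠ y) :
    ∃ w, w ≠ x ∧ w ≠ y ∧ b = {x, y, w} := by
  obtain ⟨a, c, d, hac, had, hcd, rfl⟩ := Finset.card_eq_three.mp hb
  simp only [Finset.mem_insert, Finset.mem_singleton] at hx hy
  rcases hx with rfl | rfl | rfl <;> rcases hy with rfl | rfl | rfl <;>
    first
      | exact absurd rfl hxy
      | (refine ⟨d, ?_, ?_, ?_⟩ <;> [skip; skip; ext t] <;> simp_all <;> tauto)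
      | (refine ⟨c, ?_, ?_, ?_⟩ <;> [skip; skip; ext t] <;> simp_all <;> tauto)
      | (refine ⟨a, ?_, ?_, ?_⟩ <;> [skip; skip; ext t] <;> simp_all <;> tauto)

lemma eq_add_of_add3 {u v w : W n} (h : u + v + w = 0) : w = u + v := by
  have h2 : u + v + (u + v + w) = u + v := by rw [h, add_zero]
  calc w = (u + v) + (u + v) + w := by rw [w_add_self, zero_add]
  _ = u + v := by rw [add_assoc]; exact h2

lemma eq_of_add2 {u v : W n} (h : u + v = 0) : v = u := by
  have := eq_add_of_add3 (u := 0) (v := u) (w := v) (by rwa [zero_add])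
  rwa [zero_add] at this

lemma Tb_of {Q R : Vec n} {j k : Fin 2} (hne : pt Q j ≠ pt R k) (hsum : Q.1 + R.1 = 0) :
    ∃ P, ({z, pt Q j, pt R k} : Finset (Pt n)) = Tb P := by
  have hQR : Q = R := Subtype.ext (eq_of_add2 hsum).symm
  subst hQR
  have hjk : j ≠ k := fun h => hne (by rw [h])
  refine ⟨Q, ?_⟩
  fin_cases j <;> fin_cases k
  · exact absurd rfl hjk
  · rfl
  · rw [Tb]; ext t; simp [z]; tauto
  · exact absurd rfl hjk

lemma classify {b : Finset (Pt n)} (hb : b.card = 3) (hc : colSum b = 0) :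
    (∃ P, b = Tb P) ∨
      (∃ (P Q R : Vec n) (i j k : Fin 2), P ≠ Q ∧ P ≠ R ∧ Q ≠ R ∧
        P.1 + Q.1 + R.1 = 0 ∧ b = Cb P Q R i j k) := by
  obtain ⟨a, c, d, hac, had, hcd, rfl⟩ := Finset.card_eq_three.mp hb
  rw [colSum, sum_triple binCol hac had hcd] at hc
  by_cases hz : (z : Pt n) ∈ ({a, c, d} : Finset (Pt n))
  · left
    simp only [Finset.mem_insert, Finset.mem_singleton] at hz
    rcases hz with rfl | rfl | rfl
    · rcases pt_cases c with rfl | ⟨Q, j, rfl⟩; · exact absurd rfl hac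
      rcases pt_cases d with rfl | ⟨R, k, rfl⟩; · exact absurd rfl had
      rw [binCol_z, zero_add, binCol_pt, binCol_pt] at hc
      exact Tb_of hcd hc
    · rcases pt_cases a with rfl | ⟨Q, j, rfl⟩; · exact absurd rfl hac.symm
      rcases pt_cases d with rfl | ⟨R, k, rfl⟩; · exact absurd rfl hcd
      rw [binCol_z, binCol_pt, binCol_pt] at hc
      have hc' : Q.1 + R.1 = 0 := by linear_combination hc
      obtain ⟨P, hP⟩ := Tb_of had hc'
      exact ⟨P, by rw [← hP]; ext t; simp; tauto⟩
    · rcases pt_cases a with rfl | ⟨Q, j, rfl⟩; · exact absurd rfl had.symm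
      rcases pt_cases c with rfl | ⟨R, k, rfl⟩; · exact absurd rfl hcd.symm
      rw [binCol_z, binCol_pt, binCol_pt] at hc
      have hc' : Q.1 + R.1 = 0 := by linear_combination hc
      obtain ⟨P, hP⟩ := Tb_of hac hc'
      exact ⟨P, by rw [← hP]; ext t; simp; tauto⟩
  · right
    simp only [Finset.mem_insert, Finset.mem_singleton, not_or] at hz
    rcases pt_cases a with rfl | ⟨P, i, rfl⟩
    · exact absurd rfl hz.1
    rcases pt_cases c with rfl | ⟨Q, j, rfl⟩
    · exact absurd rfl hz.2.1
    rcases pt_cases d with rfl | ⟨R, k, rfl⟩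
    · exact absurd rfl hz.2.2
    rw [binCol_pt, binCol_pt, binCol_pt] at hc
    have hPQ : P ≠ Q := by
      rintro rfl
      exact R.2 (by rw [eq_add_of_add3 hc, w_add_self])
    have hPR : P ≠ R := by
      rintro rfl
      have h2 : Q.1 + P.1 + P.1 = 0 := by linear_combination hc
      have h3 : P.1 + P.1 + Q.1 = 0 := by linear_combination h2
      exact Q.2 (by rw [eq_add_of_add3 h3, w_add_self])
    have hQR : Q ≠ R := by
      rintro rfl
      have h3 : Q.1 + Q.1 + P.1 = 0 := by linear_combination hc
      exact P.2 (by rw [eq_add_of_add3 h3, w_add_self])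
    exact ⟨P, Q, R, i, j, k, hPQ, hPR, hQR, hc, rfl⟩

def lineSet (n : ℕ) : Finset (Finset (W n)) :=
  univ.filter (fun s => s.card = 3 ∧ ∑ x ∈ s, x = 0)

noncomputable def Bof (f : Finset (W n) → ZMod 2) : Finset (Finset (Pt n)) :=
  univ.filter (fun b => (∃ P, b = Tb P) ∨
    (z ∉ b ∧ b.card = 3 ∧ colSum b = 0 ∧ idxSum b = f (vset b)))

lemma mem_Bof {f : Finset (W n) → ZMod 2} {b : Finset (Pt n)} :
    b ∈ Bof f ↔ (∃ P, b = Tb P) ∨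
      (z ∉ b ∧ b.card = 3 ∧ colSum b = 0 ∧ idxSum b = f (vset b)) := by
  simp [Bof]

lemma Tb_mem_Bof (f : Finset (W n) → ZMod 2) (P : Vec n) : Tb P ∈ Bof f :=
  mem_Bof.mpr (Or.inl ⟨P, rfl⟩)

lemma card_of_mem_Bof {f : Finset (W n) → ZMod 2} {b : Finset (Pt n)} (h : b ∈ Bof f) :
    b.card = 3 := by
  rcases mem_Bof.mp h with ⟨P, rfl⟩ | ⟨_, h2, _, _⟩
  · exact card_Tb P
  · exact h2

lemma colSum_of_mem_Bof {f : Finset (W n) → ZMod 2} {b : Finset (Pt n)} (h : b ∈ Bof f) :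
    colSum b = 0 := by
  rcases mem_Bof.mp h with ⟨P, rfl⟩ | ⟨_, _, h3, _⟩
  · exact colSum_Tb P
  · exact h3

lemma iota_tau : ∀ x : ZMod 2, ι (τ x) = x := by decide
lemma iota_inj : ∀ i j : Fin 2, ι i = ι j → i = j := by decide

lemma Tb_eq_of_mem {P P' : Vec n} {i : Fin 2} (h : pt P i ∈ Tb P') : P = P' := by
  rcases mem_Tb.mp h with h | h | h
  · exact absurd h (pt_ne_z P i)
  · exact (pt_inj h).1
  · exact (pt_inj h).1

lemma pt_mem_Tb (P : Vec n) (i : Fin 2) : pt P i ∈ Tb P := by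
  fin_cases i
  · exact mem_Tb.mpr (Or.inr (Or.inl rfl))
  · exact mem_Tb.mpr (Or.inr (Or.inr rfl))

lemma no_two_copies_in_Cb {P : Vec n} {i j : Fin 2} (hij : i ≠ j)
    {P1 Q1 R1 : Vec n} {i1 j1 k1 : Fin 2} (hPQ : P1 ≠ Q1) (hPR : P1 ≠ R1) (hQR : Q1 ≠ R1)
    (hx : pt P i ∈ Cb P1 Q1 R1 i1 j1 k1) (hy : pt P j ∈ Cb P1 Q1 R1 i1 j1 k1) : False := by
  rcases mem_Cb.mp hx with h|h|h <;> rcases mem_Cb.mp hy with h'|h'|h' <;>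
    first
    | exact hij ((pt_inj h).2.trans (pt_inj h').2.symm)
    | exact hPQ ((pt_inj h).1.symm.trans (pt_inj h').1)
    | exact hPQ ((pt_inj h').1.symm.trans (pt_inj h).1)
    | exact hPR ((pt_inj h).1.symm.trans (pt_inj h').1)
    | exact hPR ((pt_inj h').1.symm.trans (pt_inj h).1)
    | exact hQR ((pt_inj h).1.symm.trans (pt_inj h').1)
    | exact hQR ((pt_inj h').1.symm.trans (pt_inj h).1)

/-- the third point of a cross line through `P` and `Q`. -/
def thd {P Q : Vec n} (hPQ : P ≠ Q) : Vec n :=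
  ⟨P.1 + Q.1, fun h => hPQ (Subtype.ext (eq_of_add2 h)).symm⟩

lemma thd_ne_left {P Q : Vec n} (hPQ : P ≠ Q) : P ≠ thd hPQ := by
  intro h
  apply Q.2
  have h2 : P.1 = P.1 + Q.1 := congrArg Subtype.val h
  have h3 : Q.1 = P.1 + (P.1 + Q.1) := by rw [← add_assoc, w_add_self, zero_add]
  rw [h3, ← h2, w_add_self]

lemma thd_ne_right {P Q : Vec n} (hPQ : P ≠ Q) : Q ≠ thd hPQ := by
  intro h
  apply P.2
  have h2 : Q.1 = P.1 + Q.1 := congrArg Subtype.val h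
  have h3 : P.1 = (P.1 + Q.1) + Q.1 := by rw [add_assoc, w_add_self, add_zero]
  rw [h3, ← h2, w_add_self]

lemma thd_sum {P Q : Vec n} (hPQ : P ≠ Q) : P.1 + Q.1 + (thd hPQ).1 = 0 := by
  show P.1 + Q.1 + (P.1 + Q.1) = 0
  exact w_add_self _

/-- Existence and uniqueness of the block through `pt P i` and `pt Q j` in `Bof f`. -/
lemma cross_EU (f : Finset (W n) → ZMod 2) {P Q : Vec n} (hPQ : P ≠ Q) (i j : Fin 2) :
    ∃! b, b ∈ Bof f ∧ pt P i ∈ b ∧ pt Q j ∈ b := by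
  set R := thd hPQ with hR
  have hPR := thd_ne_left hPQ
  have hQR := thd_ne_right hPQ
  have hsum := thd_sum hPQ
  set s : Finset (W n) := {P.1, Q.1, R.1} with hs
  set k : Fin 2 := τ (f s - ι i - ι j) with hk
  have hιk : ι k = f s - ι i - ι j := iota_tau _
  refine ⟨Cb P Q R i j k, ⟨?_, ?_, ?_⟩, ?_⟩
  · refine mem_Bof.mpr (Or.inr ⟨zfree_Cb, card_Cb hPQ hPR hQR, ?_, ?_⟩)
    · rw [colSum_Cb hPQ hPR hQR]; exact hsum
    · rw [idxSum_Cb hPQ hPR hQR, vset_Cb, ← hs, hιk]; ring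
  · exact mem_Cb.mpr (Or.inl rfl)
  · exact mem_Cb.mpr (Or.inr (Or.inl rfl))
  · rintro b ⟨hbB, hxb, hyb⟩
    have hxy : pt P i ≠ pt Q j := fun h => hPQ (pt_inj h).1
    rcases mem_Bof.mp hbB with ⟨P', rfl⟩ | ⟨hz, hcard, hcol, hidx⟩
    · exact absurd ((Tb_eq_of_mem hxb).trans (Tb_eq_of_mem hyb).symm) hPQ
    · obtain ⟨w, hwx, hwy, rfl⟩ := third_elt hcard hxb hyb hxy
      rcases pt_cases w with rfl | ⟨S, l, rfl⟩
      · exact absurd (by simp : (z : Pt n) ∈ ({pt P i, pt Q j, z} : Finset (Pt n))) hz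
      have hSR : S = R := by
        rw [colSum, sum_triple binCol hxy (Ne.symm hwx) (Ne.symm hwy),
          binCol_pt, binCol_pt, binCol_pt] at hcol
        exact Subtype.ext (eq_add_of_add3 hcol)
      subst hSR
      have hbC : ({pt P i, pt Q j, pt R l} : Finset (Pt n)) = Cb P Q R i j l := rfl
      rw [hbC] at hidx ⊢
      rw [idxSum_Cb hPQ hPR hQR, vset_Cb, ← hs] at hidx
      have : l = k := iota_inj _ _ (by rw [hιk]; linear_combination hidx)
      rw [this]

lemma EU_swap {α : Type*} {B : Finset (Finset α)} {x y : α}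
    (h : ∃! b, b ∈ B ∧ x ∈ b ∧ y ∈ b) : ∃! b, b ∈ B ∧ y ∈ b ∧ x ∈ b := by
  obtain ⟨b, ⟨h1, h2, h3⟩, hu⟩ := h
  exact ⟨b, ⟨h1, h3, h2⟩, fun c ⟨g1, g2, g3⟩ => hu c ⟨g1, g3, g2⟩⟩

lemma zpt_EU (f : Finset (W n) → ZMod 2) (P : Vec n) (i : Fin 2) :
    ∃! b, b ∈ Bof f ∧ (z : Pt n) ∈ b ∧ pt P i ∈ b := by
  refine ⟨Tb P, ⟨Tb_mem_Bof f P, mem_Tb.mpr (Or.inl rfl), pt_mem_Tb P i⟩, ?_⟩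
  rintro b ⟨hbB, hzb, hxb⟩
  rcases mem_Bof.mp hbB with ⟨P', rfl⟩ | ⟨hz, _, _, _⟩
  · rw [Tb_eq_of_mem hxb]
  · exact absurd hzb hz

lemma copies_EU (f : Finset (W n) → ZMod 2) (P : Vec n) {i j : Fin 2} (hij : i ≠ j) :
    ∃! b, b ∈ Bof f ∧ pt P i ∈ b ∧ pt P j ∈ b := by
  refine ⟨Tb P, ⟨Tb_mem_Bof f P, pt_mem_Tb P i, pt_mem_Tb P j⟩, ?_⟩
  rintro b ⟨hbB, hxb, hyb⟩
  rcases mem_Bof.mp hbB with ⟨P', rfl⟩ | ⟨hz, hcard, hcol, _⟩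
  · rw [Tb_eq_of_mem hxb]
  · rcases classify hcard hcol with ⟨P', rfl⟩ | ⟨P1, Q1, R1, i1, j1, k1, hPQ, hPR, hQR, _, rfl⟩
    · exact absurd (mem_Tb.mpr (Or.inl rfl)) hz
    · exact absurd (no_two_copies_in_Cb hij hPQ hPR hQR hxb hyb) not_false

lemma Bof_isSTS (f : Finset (W n) → ZMod 2) : isSTS (Bof f) := by
  constructor
  · exact fun b hb => card_of_mem_Bof hb
  · intro x y hxy
    rcases pt_cases x with rfl | ⟨P, i, rfl⟩ <;> rcases pt_cases y with rfl | ⟨Q, j, rfl⟩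
    · exact absurd rfl hxy
    · exact zpt_EU f Q j
    · exact EU_swap (zpt_EU f P i)
    · by_cases hPQ : P = Q
      · subst hPQ
        exact copies_EU f P (fun h => hxy (by rw [h]))
      · exact cross_EU f hPQ i j

noncomputable def ext (g : ↥(lineSet n) → ZMod 2) : Finset (W n) → ZMod 2 :=
  fun s => if h : s ∈ lineSet n then g ⟨s, h⟩ else 0

lemma mem_lineSet {s : Finset (W n)} : s ∈ lineSet n ↔ s.card = 3 ∧ ∑ x ∈ s, x = 0 := by
  simp [lineSet]

lemma iota_zero : ι (0 : Fin 2) = 0 := rfl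
lemma iota_add : ∀ a b : Fin 2, ι (a + b) = ι a + ι b := by decide
lemma fin2_ne {a b : Fin 2} (h : a ≠ b) : b = a + 1 := by revert h; revert a b; decide

lemma vset_mem_lineSet {b : Finset (Pt n)} (hz : z ∉ b) (hcard : b.card = 3)
    (hcol : colSum b = 0) : vset b ∈ lineSet n := by
  rcases classify hcard hcol with ⟨P, rfl⟩ | ⟨P, Q, R, i, j, k, hPQ, hPR, hQR, hsum, rfl⟩
  · exact absurd (mem_Tb.mpr (Or.inl rfl)) hz
  · rw [vset_Cb]
    refine mem_lineSet.mpr ⟨card_triple (fun h => hPQ (Subtype.ext h))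
      (fun h => hPR (Subtype.ext h)) (fun h => hQR (Subtype.ext h)), ?_⟩
    exact (sum_triple (fun x => x) (fun h => hPQ (Subtype.ext h))
      (fun h => hPR (Subtype.ext h)) (fun h => hQR (Subtype.ext h))).trans hsum

lemma line_rep {s : Finset (W n)} (hs : s ∈ lineSet n) :
    ∃ (P Q : Vec n) (h : P ≠ Q), s = {P.1, Q.1, (thd h).1} := by
  obtain ⟨hcard, hsum⟩ := mem_lineSet.mp hs
  obtain ⟨p, q, r, hpq, hpr, hqr, rfl⟩ := Finset.card_eq_three.mp hcard
  have hsum' : p + q + r = 0 := (sum_triple (fun x => x) hpq hpr hqr).symm.trans hsum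
  have hp : p ≠ 0 := by
    rintro rfl
    have : q + r = 0 := by linear_combination hsum'
    exact hqr (eq_of_add2 this).symm
  have hq : q ≠ 0 := by
    rintro rfl
    have : p + r = 0 := by linear_combination hsum'
    exact hpr (eq_of_add2 this).symm
  refine ⟨⟨p, hp⟩, ⟨q, hq⟩, fun h => hpq (congrArg Subtype.val h), ?_⟩
  have : r = p + q := eq_add_of_add3 hsum'
  rw [show (thd (n := n) (P := ⟨p, hp⟩) (Q := ⟨q, hq⟩) _).1 = p + q from rfl, ← this]

lemma Bof_inj {g1 g2 : ↥(lineSet n) → ZMod 2} (h : Bof (ext g1) = Bof (ext g2)) :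
    g1 = g2 := by
  funext ℓ
  obtain ⟨P, Q, hPQ, hrep⟩ := line_rep ℓ.2
  set R := thd hPQ with hR
  have hPR := thd_ne_left hPQ
  have hQR := thd_ne_right hPQ
  have hsum := thd_sum hPQ
  have key : ∀ g : ↥(lineSet n) → ZMod 2,
      Cb P Q R 0 0 (τ (g ℓ)) ∈ Bof (ext g) := by
    intro g
    refine mem_Bof.mpr (Or.inr ⟨zfree_Cb, card_Cb hPQ hPR hQR, ?_, ?_⟩)
    · rw [colSum_Cb hPQ hPR hQR]; exact hsum
    · rw [idxSum_Cb hPQ hPR hQR, vset_Cb, ← hrep]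
      have : ext g ℓ.1 = g ℓ := by
        rw [ext]; rw [dif_pos ℓ.2]
      rw [this, iota_zero, iota_tau, zero_add, zero_add]
  have h1 := key g1
  rw [h] at h1
  rcases mem_Bof.mp h1 with ⟨P', hP'⟩ | ⟨_, _, _, hidx⟩
  · exact absurd (hP' ▸ mem_Tb.mpr (Or.inl rfl)) zfree_Cb
  · rw [idxSum_Cb hPQ hPR hQR, vset_Cb, ← hrep] at hidx
    have h2 : ext g2 ℓ.1 = g2 ℓ := by rw [ext]; rw [dif_pos ℓ.2]
    rw [h2, iota_zero, iota_tau, zero_add, zero_add] at hidx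
    exact hidx

lemma shape_cross {b : Finset (Pt n)} (hcard : b.card = 3) (hcol : colSum b = 0)
    {P Q : Vec n} {i j : Fin 2} (hPQ : P ≠ Q) (hx : pt P i ∈ b) (hy : pt Q j ∈ b) :
    ∃ l, b = Cb P Q (thd hPQ) i j l := by
  have hxy : pt P i ≠ pt Q j := fun h => hPQ (pt_inj h).1
  have hz : z ∉ b := by
    rcases classify hcard hcol with ⟨P', rfl⟩ | ⟨P1, Q1, R1, i1, j1, k1, _, _, _, _, rfl⟩
    · exact absurd ((Tb_eq_of_mem hx).trans (Tb_eq_of_mem hy).symm) hPQ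
    · exact zfree_Cb
  obtain ⟨w, hwx, hwy, rfl⟩ := third_elt hcard hx hy hxy
  rcases pt_cases w with rfl | ⟨S, l, rfl⟩
  · exact absurd (by simp : (z : Pt n) ∈ ({pt P i, pt Q j, z} : Finset (Pt n))) hz
  have hSR : S = thd hPQ := by
    rw [colSum, sum_triple binCol hxy (Ne.symm hwx) (Ne.symm hwy),
      binCol_pt, binCol_pt, binCol_pt] at hcol
    exact Subtype.ext (eq_add_of_add3 hcol)
  exact ⟨l, by rw [hSR]; rfl⟩

section surj

variable {B : Finset (Finset (Pt n))} (hcard : ∀ b ∈ B, b.card = 3)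
  (hsum : ∀ b ∈ B, colSum b = 0)
  (hU : ∀ x y : Pt n, x ≠ y → ∃! b, b ∈ B ∧ x ∈ b ∧ y ∈ b)

include hcard hsum hU

lemma k_exists {P Q : Vec n} (hPQ : P ≠ Q) (i j : Fin 2) :
    ∃ k, Cb P Q (thd hPQ) i j k ∈ B := by
  have hxy : pt P i ≠ pt Q j := fun h => hPQ (pt_inj h).1
  obtain ⟨b, ⟨hbB, hx, hy⟩, -⟩ := hU _ _ hxy
  obtain ⟨l, rfl⟩ := shape_cross (hcard b hbB) (hsum b hbB) hPQ hx hy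
  exact ⟨l, hbB⟩

omit hcard hsum in
lemma k_unique {P Q : Vec n} (hPQ : P ≠ Q) {i j k k' : Fin 2}
    (h1 : Cb P Q (thd hPQ) i j k ∈ B) (h2 : Cb P Q (thd hPQ) i j k' ∈ B) : k = k' := by
  have hxy : pt P i ≠ pt Q j := fun h => hPQ (pt_inj h).1
  obtain ⟨b, -, hu⟩ := hU _ _ hxy
  have e1 := hu _ ⟨h1, mem_Cb.mpr (Or.inl rfl), mem_Cb.mpr (Or.inr (Or.inl rfl))⟩
  have e2 := hu _ ⟨h2, mem_Cb.mpr (Or.inl rfl), mem_Cb.mpr (Or.inr (Or.inl rfl))⟩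
  have e : Cb P Q (thd hPQ) i j k = Cb P Q (thd hPQ) i j k' := e1.trans e2.symm
  have hm : pt (thd hPQ) k ∈ Cb P Q (thd hPQ) i j k' := e ▸ mem_Cb.mpr (Or.inr (Or.inr rfl))
  rcases mem_Cb.mp hm with h | h | h
  · exact absurd (pt_inj h).1 (Ne.symm (thd_ne_left hPQ))
  · exact absurd (pt_inj h).1 (Ne.symm (thd_ne_right hPQ))
  · exact (pt_inj h).2

omit hcard hsum in
lemma k_flip_j {P Q : Vec n} (hPQ : P ≠ Q) {i j j' k k' : Fin 2} (hjj : j ≠ j')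
    (h1 : Cb P Q (thd hPQ) i j k ∈ B) (h2 : Cb P Q (thd hPQ) i j' k' ∈ B) : k ≠ k' := by
  rintro rfl
  set R := thd hPQ
  have hPR := thd_ne_left hPQ
  have hxy : pt P i ≠ pt R k := fun h => hPR (pt_inj h).1
  obtain ⟨b, -, hu⟩ := hU _ _ hxy
  have e1 := hu _ ⟨h1, mem_Cb.mpr (Or.inl rfl), mem_Cb.mpr (Or.inr (Or.inr rfl))⟩
  have e2 := hu _ ⟨h2, mem_Cb.mpr (Or.inl rfl), mem_Cb.mpr (Or.inr (Or.inr rfl))⟩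
  have e : Cb P Q R i j k = Cb P Q R i j' k := e1.trans e2.symm
  have hm : pt Q j ∈ Cb P Q R i j' k := e ▸ mem_Cb.mpr (Or.inr (Or.inl rfl))
  rcases mem_Cb.mp hm with h | h | h
  · exact hPQ (pt_inj h).1.symm
  · exact hjj (pt_inj h).2
  · exact (thd_ne_right hPQ) (pt_inj h).1

omit hcard hsum in
lemma k_flip_i {P Q : Vec n} (hPQ : P ≠ Q) {i i' j k k' : Fin 2} (hii : i ≠ i')
    (h1 : Cb P Q (thd hPQ) i j k ∈ B) (h2 : Cb P Q (thd hPQ) i' j k' ∈ B) : k ≠ k' := by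
  rintro rfl
  set R := thd hPQ
  have hQR := thd_ne_right hPQ
  have hxy : pt Q j ≠ pt R k := fun h => hQR (pt_inj h).1
  obtain ⟨b, -, hu⟩ := hU _ _ hxy
  have e1 := hu _ ⟨h1, mem_Cb.mpr (Or.inr (Or.inl rfl)), mem_Cb.mpr (Or.inr (Or.inr rfl))⟩
  have e2 := hu _ ⟨h2, mem_Cb.mpr (Or.inr (Or.inl rfl)), mem_Cb.mpr (Or.inr (Or.inr rfl))⟩
  have e : Cb P Q R i j k = Cb P Q R i' j k := e1.trans e2.symm
  have hm : pt P i ∈ Cb P Q R i' j k := e ▸ mem_Cb.mpr (Or.inl rfl)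
  rcases mem_Cb.mp hm with h | h | h
  · exact hii (pt_inj h).2
  · exact hPQ (pt_inj h).1
  · exact (thd_ne_left hPQ) (pt_inj h).1

lemma k_rel {P Q : Vec n} (hPQ : P ≠ Q) {i j k k0 : Fin 2}
    (h0 : Cb P Q (thd hPQ) 0 0 k0 ∈ B) (h1 : Cb P Q (thd hPQ) i j k ∈ B) :
    k = k0 + i + j := by
  obtain ⟨k', hk'⟩ := k_exists hcard hsum hU hPQ i 0
  have hk'val : k' = k0 + i := by
    by_cases hi : i = 0
    · subst hi; rw [k_unique hU hPQ hk' h0, add_zero]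
    · have hne := k_flip_i hU hPQ (show (0 : Fin 2) ≠ i from fun h => hi h.symm) h0 hk'
      rw [fin2_ne hne, fin2_ne (show (0 : Fin 2) ≠ i from fun h => hi h.symm), zero_add]
  have hkval : k = k' + j := by
    by_cases hj : j = 0
    · subst hj; rw [k_unique hU hPQ h1 hk', add_zero]
    · have hne := k_flip_j hU hPQ (show (0 : Fin 2) ≠ j from fun h => hj h.symm) hk' h1
      rw [fin2_ne hne, fin2_ne (show (0 : Fin 2) ≠ j from fun h => hj h.symm), zero_add]
  rw [hkval, hk'val]

lemma Tb_mem (P : Vec n) : Tb P ∈ B := by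
  obtain ⟨b, ⟨hbB, hzb, hxb⟩, -⟩ := hU z (pt P 0) (Ne.symm (pt_ne_z P 0))
  rcases classify (hcard b hbB) (hsum b hbB) with ⟨P', rfl⟩ |
    ⟨P1, Q1, R1, i1, j1, k1, _, _, _, _, rfl⟩
  · rw [Tb_eq_of_mem hxb]; exact hbB
  · exact absurd hzb zfree_Cb

lemma Bof_surj : ∃ g : ↥(lineSet n) → ZMod 2, Bof (ext g) = B := by
  have hrep : ∀ ℓ : ↥(lineSet n), ∃ (P Q : Vec n) (h : P ≠ Q),
      ℓ.1 = {P.1, Q.1, (thd h).1} := fun ℓ => line_rep ℓ.2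
  choose Pf Qf hne hrepf using hrep
  have hkex : ∀ ℓ : ↥(lineSet n), ∃ k, Cb (Pf ℓ) (Qf ℓ) (thd (hne ℓ)) 0 0 k ∈ B :=
    fun ℓ => k_exists hcard hsum hU (hne ℓ) 0 0
  choose kf hkf using hkex
  set g : ↥(lineSet n) → ZMod 2 := fun ℓ => ι (kf ℓ) with hg
  refine ⟨g, ?_⟩
  have hsub : Bof (ext g) ⊆ B := by
    intro b hb
    rcases mem_Bof.mp hb with ⟨P, rfl⟩ | ⟨hz, hc3, hcol, hidx⟩
    · exact Tb_mem hcard hsum hU P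
    · have hvs : vset b ∈ lineSet n := vset_mem_lineSet hz hc3 hcol
      set ℓ : ↥(lineSet n) := ⟨vset b, hvs⟩ with hℓ
      have hPmem : (Pf ℓ).1 ∈ vset b := by
        rw [show vset b = ℓ.1 from rfl, hrepf ℓ]; exact Finset.mem_insert_self _ _
      have hQmem : (Qf ℓ).1 ∈ vset b := by
        rw [show vset b = ℓ.1 from rfl, hrepf ℓ]
        exact Finset.mem_insert_of_mem (Finset.mem_insert_self _ _)
      obtain ⟨x, hxb, hxcol⟩ := Finset.mem_image.mp hPmem
      obtain ⟨y, hyb, hycol⟩ := Finset.mem_image.mp hQmem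
      rcases pt_cases x with rfl | ⟨S, i', rfl⟩
      · exact absurd (hxcol.symm.trans binCol_z) (Pf ℓ).2
      rcases pt_cases y with rfl | ⟨T, j', rfl⟩
      · exact absurd (hycol.symm.trans binCol_z) (Qf ℓ).2
      have hSP : S = Pf ℓ := Subtype.ext (by rw [← hxcol]; rfl)
      have hTQ : T = Qf ℓ := Subtype.ext (by rw [← hycol]; rfl)
      subst hSP; subst hTQ
      obtain ⟨l, hbeq⟩ := shape_cross hc3 hcol (hne ℓ) hxb hyb
      have hext : ext g (vset b) = ι (kf ℓ) := by rw [ext]; rw [dif_pos hvs]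
      rw [hext, hbeq, idxSum_Cb (hne ℓ) (thd_ne_left _) (thd_ne_right _)] at hidx
      obtain ⟨k'', hk''⟩ := k_exists hcard hsum hU (hne ℓ) i' j'
      have hrel : k'' = kf ℓ + i' + j' := k_rel hcard hsum hU (hne ℓ) (hkf ℓ) hk''
      have hlk : l = k'' := by
        apply iota_inj
        rw [hrel, iota_add, iota_add]
        have h2 : (2 : ZMod 2) = 0 := by decide
        linear_combination hidx - (ι i' + ι j') * h2
      rw [hbeq, hlk]
      exact hk''
  refine Finset.Subset.antisymm hsub (fun b hbB => ?_)
  obtain ⟨a, c, d, hac, -, -, hbeq⟩ := Finset.card_eq_three.mp (hcard b hbB)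
  have hab : a ∈ b := by rw [hbeq]; simp
  have hcb : c ∈ b := by rw [hbeq]; simp
  obtain ⟨b', ⟨hb'Bof, hxb', hyb'⟩, -⟩ := (Bof_isSTS (ext g)).2 a c hac
  obtain ⟨bb, -, hu⟩ := hU a c hac
  have e := (hu b ⟨hbB, hab, hcb⟩).trans (hu b' ⟨hsub hb'Bof, hxb', hyb'⟩).symm
  rw [e]
  exact hb'Bof

end surj

lemma zero_not_mem_line {s : Finset (W n)} (hs : s ∈ lineSet n) : (0 : W n) ∉ s := by
  obtain ⟨P, Q, hPQ, rfl⟩ := line_rep hs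
  intro h
  rcases Finset.mem_insert.mp h with h | h
  · exact P.2 h.symm
  rcases Finset.mem_insert.mp h with h | h
  · exact Q.2 h.symm
  · exact (thd hPQ).2 (Finset.mem_singleton.mp h).symm

set_option maxHeartbeats 2000000 in
lemma card_lineSet (hn : 2 ≤ n) :
    (lineSet n).card = (2 ^ (n - 1) - 1) * (2 ^ (n - 2) - 1) / 3 := by
  classical
  have hcardW : Fintype.card (W n) = 2 ^ (n - 1) := by
    rw [Fintype.card_fun, ZMod.card, Fintype.card_fin]
  set s0 : Finset (W n) := univ.filter (· ≠ 0) with hs0def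
  have hs0 : s0.card = 2 ^ (n - 1) - 1 := by
    rw [hs0def, Finset.filter_ne', Finset.card_erase_of_mem (Finset.mem_univ _),
      Finset.card_univ, hcardW]
  set g : W n × W n → Finset (W n) := fun uv => {uv.1, uv.2, uv.1 + uv.2} with hgdef
  have hmem_s0 : ∀ u : W n, u ∈ s0 ↔ u ≠ 0 := by
    intro u; rw [hs0def]; simp
  have hmap : ∀ uv ∈ s0.offDiag, g uv ∈ lineSet n := by
    rintro ⟨u, v⟩ huv
    obtain ⟨hu, hv, hne⟩ := Finset.mem_offDiag.mp huv
    rw [hmem_s0] at hu hv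
    have h1 : u ≠ u + v := by
      intro h
      apply hv
      have h3 : v = u + (u + v) := by rw [← add_assoc, w_add_self, zero_add]
      rw [h3, ← h, w_add_self]
    have h2 : v ≠ u + v := by
      intro h
      apply hu
      have h3 : u = v + (u + v) := by
        rw [add_comm u v, ← add_assoc, w_add_self, zero_add]
      rw [h3, ← h, w_add_self]
    refine mem_lineSet.mpr ⟨card_triple hne h1 h2, ?_⟩
    rw [sum_triple (fun x => x) hne h1 h2]
    exact w_add_self (u + v)
  have hfib : ∀ s ∈ lineSet n, s0.offDiag.filter (fun uv => g uv = s) = s.offDiag := by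
    intro s hs
    obtain ⟨P, Q, hPQ, hrep⟩ := line_rep hs
    set p := P.1 with hp
    set q := Q.1 with hq
    have hr : (thd hPQ).1 = p + q := rfl
    rw [hr] at hrep
    ext ⟨u, v⟩
    simp only [Finset.mem_filter, Finset.mem_offDiag]
    constructor
    · rintro ⟨⟨hu, hv, hne⟩, heq⟩
      refine ⟨?_, ?_, hne⟩
      · rw [← heq]; exact Finset.mem_insert_self _ _
      · rw [← heq]; exact Finset.mem_insert_of_mem (Finset.mem_insert_self _ _)
    · rintro ⟨hu, hv, hne⟩
      have hnz : ∀ w ∈ s, w ≠ (0 : W n) := fun w hw h => zero_not_mem_line hs (h ▸ hw)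
      refine ⟨⟨(hmem_s0 u).mpr (hnz u hu), (hmem_s0 v).mpr (hnz v hv), hne⟩, ?_⟩
      rw [hrep] at hu hv ⊢
      simp only [Finset.mem_insert, Finset.mem_singleton] at hu hv
      simp only [hgdef]
      rcases hu with rfl | rfl | rfl <;> rcases hv with rfl | rfl | rfl
      · exact absurd rfl hne
      · rfl
      · have e : p + (p + q) = q := by rw [← add_assoc, w_add_self, zero_add]
        rw [e]; ext w; simp; tauto
      · have e : q + p = p + q := add_comm _ _
        rw [e]; ext w; simp; tauto
      · exact absurd rfl hne
      · have e : q + (p + q) = p := by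
          rw [add_comm p q, ← add_assoc, w_add_self, zero_add]
        rw [e]; ext w; simp; tauto
      · have e : (p + q) + p = q := by
          rw [add_comm, ← add_assoc, w_add_self, zero_add]
        rw [e]; ext w; simp; tauto
      · have e : (p + q) + q = p := by rw [add_assoc, w_add_self, add_zero]
        rw [e]; ext w; simp; tauto
      · exact absurd rfl hne
  have hmain := Finset.card_eq_sum_card_fiberwise hmap
  have hsum6 : ∑ s ∈ lineSet n, (s0.offDiag.filter (fun uv => g uv = s)).card
      = 6 * (lineSet n).card := by
    rw [Finset.sum_congr rfl (fun s hs => by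
      rw [hfib s hs, Finset.offDiag_card, (mem_lineSet.mp hs).1])]
    rw [Finset.sum_const, smul_eq_mul, mul_comm]
  have h6 : 6 * (lineSet n).card = (2 ^ (n - 1) - 1) * (2 ^ (n - 1) - 1) - (2 ^ (n - 1) - 1) := by
    rw [← hsum6, ← hmain, Finset.offDiag_card, hs0]
  obtain ⟨b, hb⟩ : ∃ b, 2 ^ (n - 2) = b + 1 :=
    ⟨2 ^ (n - 2) - 1, (Nat.succ_pred_eq_of_pos (Nat.pow_pos (by norm_num))).symm⟩
  have hpow : 2 ^ (n - 1) = 2 * 2 ^ (n - 2) := by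
    rw [← pow_succ']
    congr 1
    omega
  rw [hpow, hb] at h6 ⊢
  have e1 : (2 * (b + 1) - 1) * (2 * (b + 1) - 1) - (2 * (b + 1) - 1)
      = 4 * (b * b) + 2 * b := by
    have : 2 * (b + 1) - 1 = 2 * b + 1 := by omega
    rw [this]
    have h2 : (2 * b + 1) * (2 * b + 1) = 4 * (b * b) + 4 * b + 1 := by ring
    omega
  have e2 : (2 * (b + 1) - 1) * (b + 1 - 1) = 2 * (b * b) + b := by
    have h1 : 2 * (b + 1) - 1 = 2 * b + 1 := by omega
    have h2 : b + 1 - 1 = b := by omega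
    rw [h1, h2]; ring
  rw [e2]
  rw [e1] at h6
  set c := b * b
  omega

end STS8
theorem stmt8 (n : ℕ) (hn : 2 ≤ n) :
    Nat.card {B : Finset (Finset (binIdx n 1)) //
        isSTS B ∧ ∀ b ∈ B, ∑ j ∈ b, binCol j = 0} =
      2 ^ ((2 ^ (n - 1) - 1) * (2 ^ (n - 2) - 1) / 3) := by
  classical
  have hbij : Function.Bijective (fun g : ↥(STS8.lineSet n) → ZMod 2 =>
      (⟨STS8.Bof (STS8.ext g), STS8.Bof_isSTS _, fun b hb => STS8.colSum_of_mem_Bof hb⟩ :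
        {B : Finset (Finset (binIdx n 1)) //
          isSTS B ∧ ∀ b ∈ B, ∑ j ∈ b, binCol j = 0})) := by
    constructor
    · intro g1 g2 h
      exact STS8.Bof_inj (congrArg Subtype.val h)
    · rintro ⟨B, hSTS, hsum⟩
      obtain ⟨g, hg⟩ := STS8.Bof_surj hSTS.1 (fun b hb => hsum b hb) hSTS.2
      exact ⟨g, Subtype.ext hg⟩
  rw [← Nat.card_eq_of_bijective _ hbij, Nat.card_eq_fintype_card, Fintype.card_fun,
    ZMod.card, Fintype.card_coe, STS8.card_lineSet hn]
end

section
/- The number of distinct Steiner triple systems on 2^n - 1 points contained in the binary code with parity check matrix H_{n,2} equals 6^{2^{n-2}-1} · 576^{(2^{n-2}-1)(2^{n-3}-1)/3}. -/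
open Finset Function

namespace S9

attribute [local instance 0] Classical.propDecidable

abbrev V (m : ℕ) := Fin m → ZMod 2
abbrev Pt (m : ℕ) := {p : V m // p ≠ 0}
abbrev X (m : ℕ) := Fin 3 ⊕ (Pt m × Fin 4)

variable {m : ℕ}

def col : X m → V m := Sum.elim (fun _ => 0) (fun q => q.1.1)

lemma add_self (v : V m) : v + v = 0 := by
  funext i
  show v i + v i = 0
  exact (by decide : ∀ x : ZMod 2, x + x = 0) (v i)

lemma eq_of_add_eq_zero {a b : V m} (h : a + b = 0) : a = b := by
  have : a + (b + b) = 0 + b := by rw [← add_assoc, h]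
  simpa [add_self] using this

lemma add_ne_zero {a b : V m} (hab : a ≠ b) : a + b ≠ 0 :=
  fun h => hab (eq_of_add_eq_zero h)

noncomputable def rk (v : V m) : ℕ := (Fintype.equivFin (V m) v : ℕ)

lemma rk_inj : Function.Injective (rk (m := m)) := by
  intro a b h
  exact (Fintype.equivFin (V m)).injective (Fin.ext h)

noncomputable def minV (s : Finset (V m)) : V m :=
  if h : s.Nonempty then
    (Fintype.equivFin (V m)).symm ((s.image (Fintype.equivFin (V m))).min' (h.image (Fintype.equivFin (V m))))
  else 0

lemma minV_mem {s : Finset (V m)} (h : s.Nonempty) : minV s ∈ s := by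
  rw [minV, dif_pos h]
  have := Finset.min'_mem (s.image (Fintype.equivFin (V m))) (h.image (Fintype.equivFin (V m)))
  rcases Finset.mem_image.1 this with ⟨v, hv, he⟩
  rw [← he, Equiv.symm_apply_apply]; exact hv

lemma rk_minV_le {s : Finset (V m)} (h : s.Nonempty) {v : V m} (hv : v ∈ s) :
    rk (minV s) ≤ rk v := by
  have e1 : minV s = (Fintype.equivFin (V m)).symm
      ((s.image (Fintype.equivFin (V m))).min' (h.image (Fintype.equivFin (V m)))) :=
    dif_pos h
  have h2 := Finset.min'_le (s.image (Fintype.equivFin (V m)))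
      (Fintype.equivFin (V m) v) (Finset.mem_image_of_mem _ hv)
  rw [e1, rk, Equiv.apply_symm_apply]
  exact h2


section Line

variable {a b : V m}

/-- the three-element line set -/
def lset (a b : V m) : Finset (V m) := {a, b, a + b}

lemma lset_comm : lset a b = lset b a := by
  simp [lset, add_comm, Finset.insert_comm]

lemma mem_lset_closed (ha : a ≠ 0) (hb : b ≠ 0) (hab : a ≠ b)
    {x y : V m} (hx : x ∈ lset a b) (hy : y ∈ lset a b) (hxy : x ≠ y) :
    x + y ∈ lset a b := by
  simp only [lset, Finset.mem_insert, Finset.mem_singleton] at hx hy ⊢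
  rcases hx with rfl | rfl | rfl <;> rcases hy with rfl | rfl | rfl <;>
    first
      | exact absurd rfl hxy
      | simp [add_self, add_comm, add_assoc, add_left_comm]
      | (left; rw [← add_assoc, add_self, zero_add])
      | (right; left; rw [add_comm, ← add_assoc, add_self, zero_add])
      | (right; left; rw [add_comm a b, add_assoc, add_self, add_zero])
      | (left; rw [add_assoc, add_self, add_zero])

lemma lset_ne_zero (ha : a ≠ 0) (hb : b ≠ 0) (hab : a ≠ b)
    {x : V m} (hx : x ∈ lset a b) : x ≠ 0 := by
  simp only [lset, Finset.mem_insert, Finset.mem_singleton] at hx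
  rcases hx with rfl | rfl | rfl
  · exact ha
  · exact hb
  · exact add_ne_zero hab

lemma left_ne_add (hb : b ≠ 0) : a ≠ a + b := by
  intro h
  have h2 : a + a = a + (a + b) := congrArg (a + ·) h
  rw [add_self, ← add_assoc, add_self, zero_add] at h2
  exact hb h2.symm

lemma right_ne_add (ha : a ≠ 0) : b ≠ a + b := by
  intro h
  have h2 : b + b = b + (a + b) := congrArg (b + ·) h
  rw [add_self, add_comm a b, ← add_assoc, add_self, zero_add] at h2
  exact ha h2.symm

lemma card_lset (ha : a ≠ 0) (hb : b ≠ 0) (hab : a ≠ b) : (lset a b).card = 3 := by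
  rw [lset, Finset.card_insert_of_notMem, Finset.card_insert_of_notMem,
    Finset.card_singleton]
  · simp only [Finset.mem_singleton]
    exact right_ne_add ha
  · simp only [Finset.mem_insert, Finset.mem_singleton]
    rintro (rfl | h)
    · exact hab rfl
    · exact left_ne_add hb h

lemma lset_eq_of_mem (ha : a ≠ 0) (hb : b ≠ 0) (hab : a ≠ b)
    {x y : V m} (hx : x ∈ lset a b) (hy : y ∈ lset a b) (hxy : x ≠ y) :
    lset x y = lset a b := by
  have hx0 := lset_ne_zero ha hb hab hx
  have hy0 := lset_ne_zero ha hb hab hy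
  apply Finset.eq_of_subset_of_card_le
  · intro z hz
    simp only [lset, Finset.mem_insert, Finset.mem_singleton] at hz
    rcases hz with rfl | rfl | rfl
    · exact hx
    · exact hy
    · exact mem_lset_closed ha hb hab hx hy hxy
  · rw [card_lset ha hb hab, card_lset hx0 hy0 hxy]


noncomputable def pairOf (s : Finset (V m)) : V m × V m :=
  (minV s, minV (s.erase (minV s)))

noncomputable def linePair (a b : V m) : V m × V m := pairOf (lset a b)

lemma linePair_spec (ha : a ≠ 0) (hb : b ≠ 0) (hab : a ≠ b) :
    (linePair a b).1 ∈ lset a b ∧ (linePair a b).2 ∈ lset a b ∧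
    (linePair a b).1 ≠ (linePair a b).2 ∧
    rk (linePair a b).1 < rk (linePair a b).2 ∧
    rk (linePair a b).2 < rk ((linePair a b).1 + (linePair a b).2) ∧
    lset (linePair a b).1 (linePair a b).2 = lset a b := by
  have hs : (lset a b).Nonempty := by
    rw [← Finset.card_pos, card_lset ha hb hab]; norm_num
  set s := lset a b with hsdef
  set x := minV s with hx
  have hxs : x ∈ s := minV_mem hs
  have hes : (s.erase x).Nonempty := by
    rw [← Finset.card_pos, Finset.card_erase_of_mem hxs, card_lset ha hb hab]
    norm_num
  set y := minV (s.erase x) with hy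
  have hyes : y ∈ s.erase x := minV_mem hes
  have hys : y ∈ s := Finset.mem_of_mem_erase hyes
  have hyx : y ≠ x := Finset.ne_of_mem_erase hyes
  have h1 : (linePair a b).1 = x := rfl
  have h2 : (linePair a b).2 = y := rfl
  rw [h1, h2]
  have hxy : x ≠ y := hyx.symm
  have hltxy : rk x < rk y :=
    lt_of_le_of_ne (rk_minV_le hs hys) (fun h => hxy (rk_inj h))
  have hx0 : x ≠ 0 := lset_ne_zero ha hb hab hxs
  have hy0 : y ≠ 0 := lset_ne_zero ha hb hab hys
  have hzs : x + y ∈ s := mem_lset_closed ha hb hab hxs hys hxy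
  have hzx : x + y ≠ x := (left_ne_add hy0).symm
  have hzy : x + y ≠ y := (right_ne_add hx0).symm
  have hze : x + y ∈ s.erase x := Finset.mem_erase.2 ⟨hzx, hzs⟩
  have hltz : rk y < rk (x + y) :=
    lt_of_le_of_ne (rk_minV_le hes hze) (fun h => hzy (rk_inj h).symm)
  exact ⟨hxs, hys, hxy, hltxy, hltz, lset_eq_of_mem ha hb hab hxs hys hxy⟩

abbrev Ltt (m : ℕ) : Type := {pq : Pt m × Pt m //
  rk pq.1.1 < rk pq.2.1 ∧ rk pq.2.1 < rk (pq.1.1 + pq.2.1)}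

noncomputable def lineK (a b : V m) (ha : a ≠ 0) (hb : b ≠ 0) (hab : a ≠ b) : Ltt m :=
  ⟨(⟨(linePair a b).1, lset_ne_zero ha hb hab (linePair_spec ha hb hab).1⟩,
    ⟨(linePair a b).2, lset_ne_zero ha hb hab (linePair_spec ha hb hab).2.1⟩),
    (linePair_spec ha hb hab).2.2.2.1, (linePair_spec ha hb hab).2.2.2.2.1⟩

lemma lineK_congr {x y : V m} (hx : x ≠ 0) (hy : y ≠ 0) (hxy : x ≠ y)
    (ha : a ≠ 0) (hb : b ≠ 0) (hab : a ≠ b) (h : lset x y = lset a b) :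
    lineK x y hx hy hxy = lineK a b ha hb hab := by
  have : linePair x y = linePair a b := congrArg pairOf h
  apply Subtype.ext
  apply Prod.ext <;> apply Subtype.ext <;>
    simp only [lineK] <;> rw [this]

lemma lset_linePair (ha : a ≠ 0) (hb : b ≠ 0) (hab : a ≠ b) :
    lset (lineK a b ha hb hab).1.1.1 (lineK a b ha hb hab).1.2.1 = lset a b :=
  (linePair_spec ha hb hab).2.2.2.2.2

lemma lineK_canon (l : Ltt m) :
    lineK l.1.1.1 l.1.2.1 l.1.1.2 l.1.2.2
      (fun h => absurd (congrArg rk h) (ne_of_lt l.2.1)) = l := by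
  obtain ⟨⟨p, q⟩, hlt1, hlt2⟩ := l
  have hp0 : p.1 ≠ 0 := p.2
  have hq0 : q.1 ≠ 0 := q.2
  have hpq : p.1 ≠ q.1 := fun h => absurd (congrArg rk h) (ne_of_lt hlt1)
  have hs : (lset p.1 q.1).Nonempty := by
    rw [← Finset.card_pos, card_lset hp0 hq0 hpq]; norm_num
  -- minV (lset p q) = p
  have hmin1 : minV (lset p.1 q.1) = p.1 := by
    have hm := minV_mem hs
    have hle := rk_minV_le hs (show p.1 ∈ lset p.1 q.1 by simp [lset])
    simp only [lset, Finset.mem_insert, Finset.mem_singleton] at hm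
    rcases hm with h | h | h
    · exact h
    · exact absurd (lt_of_lt_of_le hlt1 (h ▸ hle)) (lt_irrefl _)
    · exact absurd (lt_of_lt_of_le (lt_trans hlt1 hlt2) (h ▸ hle)) (lt_irrefl _)
  have herase : (lset p.1 q.1).erase (minV (lset p.1 q.1)) = {q.1, p.1 + q.1} := by
    rw [hmin1, lset, Finset.erase_insert]
    simp only [Finset.mem_insert, Finset.mem_singleton]
    rintro (h | h)
    · exact hpq h
    · exact left_ne_add hq0 h
  have hs2 : ({q.1, p.1 + q.1} : Finset (V m)).Nonempty := ⟨q.1, by simp⟩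
  have hmin2 : minV ({q.1, p.1 + q.1} : Finset (V m)) = q.1 := by
    have hm := minV_mem hs2
    have hle := rk_minV_le hs2 (show q.1 ∈ ({q.1, p.1 + q.1} : Finset (V m)) by simp)
    simp only [Finset.mem_insert, Finset.mem_singleton] at hm
    rcases hm with h | h
    · exact h
    · exact absurd (lt_of_lt_of_le hlt2 (h ▸ hle)) (lt_irrefl _)
  apply Subtype.ext
  apply Prod.ext <;> apply Subtype.ext <;>
    simp only [lineK, linePair, pairOf]
  · exact hmin1
  · rw [herase, hmin2]


lemma l_ne (l : Ltt m) : l.1.1.1 ≠ l.1.2.1 :=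
  fun h => absurd (congrArg rk h) (ne_of_lt l.2.1)

noncomputable def l3 (l : Ltt m) : Pt m := ⟨l.1.1.1 + l.1.2.1, add_ne_zero (l_ne l)⟩

lemma lineK_of_mem_lset {x y : V m} (hx' : x ∈ lset a b) (hy' : y ∈ lset a b)
    (hxy : x ≠ y) (ha : a ≠ 0) (hb : b ≠ 0) (hab : a ≠ b) :
    lineK x y (lset_ne_zero ha hb hab hx') (lset_ne_zero ha hb hab hy') hxy
      = lineK a b ha hb hab :=
  lineK_congr _ _ _ ha hb hab (lset_eq_of_mem ha hb hab hx' hy' hxy)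

lemma lset_canon (l : Ltt m) :
    lset l.1.1.1 l.1.2.1 = {l.1.1.1, l.1.2.1, (l3 l).1} := rfl

noncomputable instance : Fintype (Ltt m) := Fintype.ofFinite _

noncomputable def lineOf' (pq : Pt m × Pt m) : Option (Ltt m) :=
  if h : pq.1.1 ≠ pq.2.1 then some (lineK pq.1.1 pq.2.1 pq.1.2 pq.2.2 h) else none

lemma card_V : Fintype.card (V m) = 2 ^ m := by
  rw [Fintype.card_fun]
  simp

lemma card_Pt : Fintype.card (Pt m) = 2 ^ m - 1 := by
  classical
  have h := Fintype.card_subtype_compl (fun v : V m => v = 0)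
  rw [Fintype.card_subtype_eq, card_V] at h
  calc Fintype.card (Pt m) = Fintype.card {v : V m // ¬ (v = 0)} := by convert rfl
    _ = 2 ^ m - 1 := h

lemma tripleF_card (l : Ltt m) :
    ({l.1.1, l.1.2, l3 l} : Finset (Pt m)).card = 3 := by
  have h12 : l.1.1 ≠ l.1.2 := fun h => l_ne l (congrArg Subtype.val h)
  have h13 : l.1.1 ≠ l3 l := fun h => left_ne_add l.1.2.2 (congrArg Subtype.val h)
  have h23 : l.1.2 ≠ l3 l := fun h => right_ne_add l.1.1.2 (congrArg Subtype.val h)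
  rw [Finset.card_insert_of_notMem, Finset.card_insert_of_notMem, Finset.card_singleton]
  · simpa using h23
  · simp only [Finset.mem_insert, Finset.mem_singleton]
    push_neg
    exact ⟨h12, h13⟩

lemma fiber_some (l : Ltt m) :
    (Finset.univ.offDiag.filter (fun pq : Pt m × Pt m => lineOf' pq = some l))
      = ({l.1.1, l.1.2, l3 l} : Finset (Pt m)).offDiag := by
  ext ⟨p, q⟩
  simp only [Finset.mem_filter, Finset.mem_offDiag, Finset.mem_univ, true_and]
  constructor
  · rintro ⟨hne, hl⟩
    have hpq : p.1 ≠ q.1 := fun h => hne (Subtype.ext h)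
    simp only [lineOf'] at hl
    rw [dif_pos hpq] at hl
    have hl2 : lineK p.1 q.1 p.2 q.2 hpq = l := Option.some_injective _ hl
    have hset : lset l.1.1.1 l.1.2.1 = lset p.1 q.1 := by
      have := lset_linePair (a := p.1) (b := q.1) p.2 q.2 hpq
      rw [hl2] at this
      exact this
    have hmem : ∀ x : Pt m, x.1 ∈ lset p.1 q.1 → x ∈ ({l.1.1, l.1.2, l3 l} : Finset (Pt m)) := by
      intro x hx
      rw [← hset, lset_canon] at hx
      simp only [lset, Finset.mem_insert, Finset.mem_singleton] at hx
      simp only [Finset.mem_insert, Finset.mem_singleton]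
      rcases hx with h | h | h
      · exact Or.inl (Subtype.ext h)
      · exact Or.inr (Or.inl (Subtype.ext h))
      · exact Or.inr (Or.inr (Subtype.ext h))
    exact ⟨hmem p (by simp [lset]), hmem q (by simp [lset]), hne⟩
  · rintro ⟨hp, hq, hne⟩
    have hpq : p.1 ≠ q.1 := fun h => hne (Subtype.ext h)
    refine ⟨hne, ?_⟩
    simp only [lineOf']
    rw [dif_pos hpq]
    congr 1
    have hl12 : l.1.1.1 ≠ l.1.2.1 := l_ne l
    have hmem : ∀ x : Pt m, x ∈ ({l.1.1, l.1.2, l3 l} : Finset (Pt m)) →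
        x.1 ∈ lset l.1.1.1 l.1.2.1 := by
      intro x hx
      simp only [Finset.mem_insert, Finset.mem_singleton] at hx
      simp only [lset, Finset.mem_insert, Finset.mem_singleton]
      rcases hx with rfl | rfl | rfl
      · exact Or.inl rfl
      · exact Or.inr (Or.inl rfl)
      · exact Or.inr (Or.inr rfl)
    have := lineK_of_mem_lset (hmem p hp) (hmem q hq) hpq l.1.1.2 l.1.2.2 hl12
    rw [this]
    exact lineK_canon l

lemma card_Ltt (hm : 1 ≤ m) :
    Nat.card (Ltt m) = (2 ^ m - 1) * (2 ^ (m - 1) - 1) / 3 := by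
  classical
  have key : (Finset.univ.offDiag : Finset ((Pt m × Pt m))).card
      = ∑ o : Option (Ltt m), ((Finset.univ.offDiag).filter (fun pq => lineOf' pq = o)).card := by
    exact Finset.card_eq_sum_card_fiberwise (fun x _ => Finset.mem_univ _)
  rw [Fintype.sum_option] at key
  have hnone : ((Finset.univ.offDiag).filter
      (fun pq : Pt m × Pt m => lineOf' pq = none)).card = 0 := by
    rw [Finset.card_eq_zero]
    ext ⟨p, q⟩
    simp only [Finset.mem_filter, Finset.mem_offDiag, Finset.mem_univ, true_and,
      Finset.notMem_empty, iff_false, not_and]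
    intro hne
    have hpq : p.1 ≠ q.1 := fun h => hne (Subtype.ext h)
    simp only [lineOf']
    rw [dif_pos hpq]
    simp
  have hfib : ∀ l : Ltt m, ((Finset.univ.offDiag).filter
      (fun pq : Pt m × Pt m => lineOf' pq = some l)).card = 6 := by
    intro l
    rw [fiber_some l, Finset.offDiag_card, tripleF_card l]
  rw [show ∀ (inst : DecidablePred (fun pq : Pt m × Pt m => lineOf' pq = none)),
      (@Finset.filter _ (fun pq : Pt m × Pt m => lineOf' pq = none) inst
        Finset.univ.offDiag).card = 0 from fun _ => by convert hnone] at key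
  simp only [hfib, Finset.sum_const,
    Finset.card_univ, smul_eq_mul, zero_add] at key
  have hoff : (Finset.univ.offDiag : Finset ((Pt m × Pt m))).card
      = (2 ^ m - 1) * (2 ^ m - 1) - (2 ^ m - 1) := by
    rw [Finset.offDiag_card, Finset.card_univ, card_Pt]
  rw [hoff] at key
  rw [Nat.card_eq_fintype_card]
  have hN : (2:ℕ) ^ m = 2 * 2 ^ (m - 1) := by
    conv_lhs => rw [← Nat.sub_add_cancel hm]
    rw [pow_succ]
    ring
  obtain ⟨k, hk⟩ : ∃ k, 2 ^ (m-1) = k + 1 :=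
    ⟨2 ^ (m-1) - 1, by have := Nat.one_le_two_pow (n := m - 1); omega⟩
  have hA : (2 ^ m - 1) * (2 ^ m - 1) - (2 ^ m - 1)
      = ((2 ^ m - 1) * (2 ^ (m-1) - 1)) * 2 := by
    rw [hN, hk]
    have h1 : 2 * (k+1) - 1 = 2*k+1 := by omega
    have h2 : (k+1) - 1 = k := rfl
    rw [h1, h2]
    apply Nat.sub_eq_of_eq_add
    ring
  rw [hA] at key
  omega

end Line

section Comp

abbrev Kc (m : ℕ) := Unit ⊕ (Pt m ⊕ Ltt m)

variable {m : ℕ}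

def k0 : Kc m := Sum.inl ()
def kp (p : Pt m) : Kc m := Sum.inr (Sum.inl p)
def kl (l : Ltt m) : Kc m := Sum.inr (Sum.inr l)

noncomputable def pic (x y : X m) : Kc m :=
  if hx : col x = 0 then
    (if hy : col y = 0 then k0 else kp ⟨col y, hy⟩)
  else if hy : col y = 0 then kp ⟨col x, hx⟩
  else if hxy : col x = col y then kp ⟨col x, hx⟩
  else kl (lineK (col x) (col y) hx hy hxy)

variable {x y : X m}

lemma pic_00 (hx : col x = 0) (hy : col y = 0) : pic x y = k0 := by
  simp only [pic]; rw [dif_pos hx, dif_pos hy]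

lemma pic_0p (hx : col x = 0) (hy : col y ≠ 0) : pic x y = kp ⟨col y, hy⟩ := by
  simp only [pic]; rw [dif_pos hx, dif_neg hy]

lemma pic_p0 (hx : col x ≠ 0) (hy : col y = 0) : pic x y = kp ⟨col x, hx⟩ := by
  simp only [pic]; rw [dif_neg hx, dif_pos hy]

lemma pic_pp (hx : col x ≠ 0) (hy : col y ≠ 0) (h : col x = col y) :
    pic x y = kp ⟨col x, hx⟩ := by
  simp only [pic]; rw [dif_neg hx, dif_neg hy, dif_pos h]

lemma pic_pq (hx : col x ≠ 0) (hy : col y ≠ 0) (h : col x ≠ col y) :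
    pic x y = kl (lineK (col x) (col y) hx hy h) := by
  simp only [pic]; rw [dif_neg hx, dif_neg hy, dif_neg h]

def inT : Kc m → Finset (X m) → Prop
  | Sum.inl _, b => b.card = 3 ∧ (∑ x ∈ b, col x) = 0 ∧ ∀ x ∈ b, col x = 0
  | Sum.inr (Sum.inl p), b => b.card = 3 ∧ (∑ x ∈ b, col x) = 0 ∧
      (∃ x ∈ b, col x = p.1) ∧ ∀ x ∈ b, col x = 0 ∨ col x = p.1
  | Sum.inr (Sum.inr l), b => b.card = 3 ∧ (∑ x ∈ b, col x) = 0 ∧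
      (∃ x ∈ b, col x = l.1.1.1) ∧ (∃ x ∈ b, col x = l.1.2.1) ∧
      ∀ x ∈ b, col x ∈ lset l.1.1.1 l.1.2.1

lemma inT_card {k : Kc m} {b : Finset (X m)} (h : inT k b) : b.card = 3 := by
  rcases k with _ | p | l <;> exact h.1

lemma inT_sum {k : Kc m} {b : Finset (X m)} (h : inT k b) : (∑ x ∈ b, col x) = 0 := by
  rcases k with _ | p | l <;> exact h.2.1

lemma sum_three {α β : Type*} [AddCommMonoid β] [DecidableEq α] {x y z : α}
    (hxy : x ≠ y) (hxz : x ≠ z) (hyz : y ≠ z) (f : α → β) :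
    ∑ w ∈ ({x, y, z} : Finset α), f w = f x + f y + f z := by
  rw [Finset.sum_insert (by simp [hxy, hxz]), Finset.sum_insert (by simp [hyz]),
    Finset.sum_singleton, add_assoc]

lemma third_spec {α : Type*} [DecidableEq α] {b : Finset α} (h3 : b.card = 3)
    {x y : α} (hx : x ∈ b) (hy : y ∈ b) (hxy : x ≠ y) :
    ∃ z, z ∈ b ∧ z ≠ x ∧ z ≠ y ∧ b = {x, y, z} ∧
      ∀ w ∈ b, w ≠ x → w ≠ y → w = z := by
  have hyb : y ∈ b.erase x := Finset.mem_erase.2 ⟨hxy.symm, hy⟩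
  have hc1 : ((b.erase x).erase y).card = 1 := by
    rw [Finset.card_erase_of_mem hyb, Finset.card_erase_of_mem hx, h3]
  obtain ⟨z, hz⟩ := Finset.card_eq_one.1 hc1
  have hzmem : z ∈ (b.erase x).erase y := hz ▸ Finset.mem_singleton_self z
  have hzb : z ∈ b := Finset.mem_of_mem_erase (Finset.mem_of_mem_erase hzmem)
  have hzy : z ≠ y := (Finset.mem_erase.1 hzmem).1
  have hzx : z ≠ x := (Finset.mem_erase.1 (Finset.mem_of_mem_erase hzmem)).1
  have hsub : ({x, y, z} : Finset α) ⊆ b := by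
    intro w hw
    simp only [Finset.mem_insert, Finset.mem_singleton] at hw
    rcases hw with rfl | rfl | rfl <;> assumption
  have hcard : ({x, y, z} : Finset α).card = 3 := by
    rw [Finset.card_insert_of_notMem (by simp [hxy, Ne.symm hzx]), Finset.card_insert_of_notMem
      (by simp [Ne.symm hzy]), Finset.card_singleton]
  have hbeq : b = {x, y, z} :=
    (Finset.eq_of_subset_of_card_le hsub (by rw [hcard, h3])).symm
  refine ⟨z, hzb, hzx, hzy, hbeq, ?_⟩
  intro w hw hwx hwy
  have : w ∈ (b.erase x).erase y :=
    Finset.mem_erase.2 ⟨hwy, Finset.mem_erase.2 ⟨hwx, hw⟩⟩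
  rw [hz] at this
  exact Finset.mem_singleton.1 this

lemma exists_inT {b : Finset (X m)} (h3 : b.card = 3)
    (h0 : (∑ x ∈ b, col x) = 0) : ∃ k : Kc m, inT k b := by
  obtain ⟨x, y, z, hxy, hxz, hyz, rfl⟩ := Finset.card_eq_three.1 h3
  have hsum : col x + col y + col z = 0 := by
    rw [← sum_three hxy hxz hyz col]; exact h0
  have hmem : ∀ w : X m, w ∈ ({x, y, z} : Finset (X m)) ↔ (w = x ∨ w = y ∨ w = z) := by
    intro w; simp [Finset.mem_insert, Finset.mem_singleton]
  by_cases hx : col x = 0 <;> by_cases hy : col y = 0 <;> by_cases hz : col z = 0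
  · refine ⟨k0, h3, h0, ?_⟩
    intro w hw
    rcases (hmem w).1 hw with rfl | rfl | rfl <;> assumption
  · exfalso; rw [hx, hy, zero_add, zero_add] at hsum; exact hz hsum
  · exfalso
    rw [hx, zero_add, hz, add_zero] at hsum
    exact hy hsum
  · -- x zero, y z nonzero equal
    rw [hx, zero_add] at hsum
    have hyz' : col y = col z := eq_of_add_eq_zero hsum
    refine ⟨kp ⟨col y, hy⟩, h3, h0, ⟨y, by simp [hmem], rfl⟩, ?_⟩
    intro w hw
    rcases (hmem w).1 hw with rfl | rfl | rfl
    · exact Or.inl hx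
    · exact Or.inr rfl
    · exact Or.inr hyz'.symm
  · exfalso
    rw [hy, hz, add_zero, add_zero] at hsum; exact hx hsum
  · -- y zero, x z nonzero
    rw [hy, add_zero] at hsum
    have hxz' : col x = col z := eq_of_add_eq_zero hsum
    refine ⟨kp ⟨col x, hx⟩, h3, h0, ⟨x, by simp [hmem], rfl⟩, ?_⟩
    intro w hw
    rcases (hmem w).1 hw with rfl | rfl | rfl
    · exact Or.inr rfl
    · exact Or.inl hy
    · exact Or.inr hxz'.symm
  · -- z zero, x y nonzero
    have hsum' : col x + col y = 0 := by
      rw [hz, add_zero] at hsum; exact hsum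
    have hxy' : col x = col y := eq_of_add_eq_zero hsum'
    refine ⟨kp ⟨col x, hx⟩, h3, h0, ⟨x, by simp [hmem], rfl⟩, ?_⟩
    intro w hw
    rcases (hmem w).1 hw with rfl | rfl | rfl
    · exact Or.inr rfl
    · exact Or.inr hxy'.symm
    · exact Or.inl hz
  · -- none zero
    have hxyne : col x ≠ col y := by
      intro h
      rw [h, add_self, zero_add] at hsum
      exact hz hsum
    have hzeq : col x + col y = col z := by
      have : (col x + col y) + col z = 0 := hsum
      exact eq_of_add_eq_zero this
    set l := lineK (col x) (col y) hx hy hxyne with hl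
    have hls : lset l.1.1.1 l.1.2.1 = lset (col x) (col y) :=
      lset_linePair hx hy hxyne
    have hmem3 : ∀ v : V m, v ∈ lset (col x) (col y) →
        ∃ w ∈ ({x, y, z} : Finset (X m)), col w = v := by
      intro v hv
      simp only [lset, Finset.mem_insert, Finset.mem_singleton] at hv
      rcases hv with rfl | rfl | rfl
      · exact ⟨x, by simp [hmem], rfl⟩
      · exact ⟨y, by simp [hmem], rfl⟩
      · exact ⟨z, by simp [hmem], hzeq.symm⟩
    refine ⟨kl l, h3, h0, ?_, ?_, ?_⟩
    · obtain ⟨w, hw, hcw⟩ := hmem3 l.1.1.1 (by rw [← hls]; simp [lset])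
      exact ⟨w, hw, hcw⟩
    · obtain ⟨w, hw, hcw⟩ := hmem3 l.1.2.1 (by rw [← hls]; simp [lset])
      exact ⟨w, hw, hcw⟩
    · intro w hw
      rw [hls]
      rcases (hmem w).1 hw with rfl | rfl | rfl
      · simp [lset]
      · simp [lset]
      · rw [← hzeq]; simp [lset]


lemma col_zero_inl {w : X m} (h : col w = 0) : ∃ z : Fin 3, w = Sum.inl z := by
  rcases w with z | ⟨q, i⟩
  · exact ⟨z, rfl⟩
  · exact absurd h q.2

lemma col_ne_inr {w : X m} (h : col w ≠ 0) :
    ∃ (q : Pt m) (i : Fin 4), w = Sum.inr (q, i) ∧ q.1 = col w := by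
  rcases w with z | ⟨q, i⟩
  · exact absurd rfl h
  · exact ⟨q, i, rfl, rfl⟩

lemma pic_eq_of_inT {k : Kc m} {b : Finset (X m)} (hb : inT k b)
    {x y : X m} (hx : x ∈ b) (hy : y ∈ b) (hxy : x ≠ y) : pic x y = k := by
  rcases k with u | p | l
  · rw [pic_00 (hb.2.2 x hx) (hb.2.2 y hy)]
    rfl
  · obtain ⟨h3, hsum, ⟨w, hw, hcw⟩, hall⟩ := hb
    by_cases hcx : col x = 0 <;> by_cases hcy : col y = 0
    · exfalso
      obtain ⟨z, hzb, hzx, hzy, hbeq, huniq⟩ := third_spec h3 hx hy hxy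
      have hcz : col z = 0 := by
        rw [hbeq, sum_three hxy (Ne.symm hzx) (Ne.symm hzy) col, hcx, hcy,
          zero_add, zero_add] at hsum
        exact hsum
      have : p.1 = 0 := by
        rw [hbeq] at hw
        simp only [Finset.mem_insert, Finset.mem_singleton] at hw
        rcases hw with rfl | rfl | rfl
        · rw [← hcw]; exact hcx
        · rw [← hcw]; exact hcy
        · rw [← hcw]; exact hcz
      exact p.2 this
    · rw [pic_0p hcx hcy]
      have : col y = p.1 := (hall y hy).resolve_left hcy
      exact congrArg kp (Subtype.ext this)
    · rw [pic_p0 hcx hcy]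
      have : col x = p.1 := (hall x hx).resolve_left hcx
      exact congrArg kp (Subtype.ext this)
    · have hxp : col x = p.1 := (hall x hx).resolve_left hcx
      have hyp : col y = p.1 := (hall y hy).resolve_left hcy
      rw [pic_pp hcx hcy (hxp.trans hyp.symm)]
      exact congrArg kp (Subtype.ext hxp)
  · obtain ⟨h3, hsum, -, -, hall⟩ := hb
    have hp0 : l.1.1.1 ≠ 0 := l.1.1.2
    have hq0 : l.1.2.1 ≠ 0 := l.1.2.2
    have hpq : l.1.1.1 ≠ l.1.2.1 := l_ne l
    have hcx : col x ≠ 0 := lset_ne_zero hp0 hq0 hpq (hall x hx)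
    have hcy : col y ≠ 0 := lset_ne_zero hp0 hq0 hpq (hall y hy)
    have hcxy : col x ≠ col y := by
      intro h
      obtain ⟨z, hzb, hzx, hzy, hbeq, -⟩ := third_spec h3 hx hy hxy
      have hcz : col z ≠ 0 := lset_ne_zero hp0 hq0 hpq (hall z hzb)
      apply hcz
      rw [hbeq, sum_three hxy (Ne.symm hzx) (Ne.symm hzy) col] at hsum
      have : col x + col y = col z := eq_of_add_eq_zero hsum
      rw [← this, h, add_self]
    rw [pic_pq hcx hcy hcxy]
    apply congrArg kl
    have h1 := lineK_of_mem_lset (hall x hx) (hall y hy) hcxy hp0 hq0 hpq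
    have h2 := lineK_canon l
    exact h1.trans h2

lemma inT_unique {k k' : Kc m} {b : Finset (X m)} (h : inT k b) (h' : inT k' b) :
    k = k' := by
  obtain ⟨x, y, z, hxy, -, -, rfl⟩ := Finset.card_eq_three.1 (inT_card h)
  have hx : x ∈ ({x, y, z} : Finset (X m)) := by simp
  have hy : y ∈ ({x, y, z} : Finset (X m)) := by simp
  rw [← pic_eq_of_inT h hx hy hxy, pic_eq_of_inT h' hx hy hxy]

end Comp

section Global

variable {m : ℕ}

def Cov (k : Kc m) : Type := {B' : Finset (Finset (X m)) //
  (∀ b ∈ B', inT k b) ∧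
  ∀ x y : X m, x ≠ y → pic x y = k → ∃! b, b ∈ B' ∧ x ∈ b ∧ y ∈ b}

abbrev SetSTS (m : ℕ) : Type := {B : Finset (Finset (X m)) //
  isSTS B ∧ ∀ b ∈ B, (∑ j ∈ b, col j) = 0}

noncomputable def globalEquiv : SetSTS m ≃ Π k : Kc m, Cov k where
  toFun B := fun k => ⟨B.1.filter (fun b => inT k b), by
    constructor
    · intro b hb
      exact (Finset.mem_filter.1 hb).2
    · intro x y hxy hpic
      obtain ⟨b, ⟨hbB, hxb, hyb⟩, huniq⟩ := B.2.1.2 x y hxy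
      obtain ⟨k', hk'⟩ := exists_inT (B.2.1.1 b hbB) (B.2.2 b hbB)
      have : pic x y = k' := pic_eq_of_inT hk' hxb hyb hxy
      rw [hpic] at this
      refine ⟨b, ⟨Finset.mem_filter.2 ⟨hbB, this ▸ hk'⟩, hxb, hyb⟩, ?_⟩
      intro b' ⟨hb', hxb', hyb'⟩
      exact huniq b' ⟨(Finset.mem_filter.1 hb').1, hxb', hyb'⟩⟩
  invFun F := ⟨Finset.univ.biUnion (fun k => (F k).1), by
    refine ⟨⟨?_, ?_⟩, ?_⟩
    · intro b hb
      obtain ⟨k, -, hbk⟩ := Finset.mem_biUnion.1 hb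
      exact inT_card ((F k).2.1 b hbk)
    · intro x y hxy
      obtain ⟨b, ⟨hbk, hxb, hyb⟩, huniq⟩ := (F (pic x y)).2.2 x y hxy rfl
      refine ⟨b, ⟨Finset.mem_biUnion.2 ⟨pic x y, Finset.mem_univ _, hbk⟩, hxb, hyb⟩, ?_⟩
      intro b' ⟨hb', hxb', hyb'⟩
      obtain ⟨k', -, hbk'⟩ := Finset.mem_biUnion.1 hb'
      have hk' : pic x y = k' := pic_eq_of_inT ((F k').2.1 b' hbk') hxb' hyb' hxy
      exact huniq b' ⟨hk' ▸ hbk', hxb', hyb'⟩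
    · intro b hb
      obtain ⟨k, -, hbk⟩ := Finset.mem_biUnion.1 hb
      exact inT_sum ((F k).2.1 b hbk)⟩
  left_inv B := by
    apply Subtype.ext
    ext b
    simp only [Finset.mem_biUnion, Finset.mem_univ, true_and, Finset.mem_filter]
    constructor
    · rintro ⟨k, hb, -⟩
      exact hb
    · intro hb
      obtain ⟨k, hk⟩ := exists_inT (B.2.1.1 b hb) (B.2.2 b hb)
      exact ⟨k, hb, hk⟩
  right_inv F := by
    funext k
    apply Subtype.ext
    ext b
    simp only [Finset.mem_filter, Finset.mem_biUnion, Finset.mem_univ, true_and]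
    constructor
    · rintro ⟨⟨k', hbk'⟩, hk⟩
      have : k' = k := inT_unique ((F k').2.1 b hbk') hk
      exact this ▸ hbk'
    · intro hb
      exact ⟨⟨k, hb⟩, (F k).2.1 b hb⟩

end Global

section Inversion

variable {m : ℕ} {x y : X m}

lemma pic_eq_k0 (h : pic x y = k0) : col x = 0 ∧ col y = 0 := by
  by_cases hx : col x = 0 <;> by_cases hy : col y = 0
  · exact ⟨hx, hy⟩
  · rw [pic_0p hx hy] at h; exact absurd h (by simp [kp, k0])
  · rw [pic_p0 hx hy] at h; exact absurd h (by simp [kp, k0])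
  · by_cases hxy : col x = col y
    · rw [pic_pp hx hy hxy] at h; exact absurd h (by simp [kp, k0])
    · rw [pic_pq hx hy hxy] at h; exact absurd h (by simp [kl, k0])

lemma kp_inj {p q : Pt m} (h : (kp p : Kc m) = kp q) : p = q := by
  simpa [kp] using h

lemma pic_eq_kp {p : Pt m} (h : pic x y = kp p) :
    (col x = 0 ∧ col y = p.1) ∨ (col y = 0 ∧ col x = p.1) ∨
    (col x = p.1 ∧ col y = p.1) := by
  by_cases hx : col x = 0 <;> by_cases hy : col y = 0
  · rw [pic_00 hx hy] at h; exact absurd h.symm (by simp [kp, k0])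
  · rw [pic_0p hx hy] at h
    exact Or.inl ⟨hx, congrArg Subtype.val (kp_inj h)⟩
  · rw [pic_p0 hx hy] at h
    exact Or.inr (Or.inl ⟨hy, congrArg Subtype.val (kp_inj h)⟩)
  · by_cases hxy : col x = col y
    · rw [pic_pp hx hy hxy] at h
      have := congrArg Subtype.val (kp_inj h)
      exact Or.inr (Or.inr ⟨this, hxy ▸ this⟩)
    · rw [pic_pq hx hy hxy] at h; exact absurd h (by simp [kl, kp])

lemma pic_eq_kl {l : Ltt m} (h : pic x y = kl l) :
    col x ≠ 0 ∧ col y ≠ 0 ∧ col x ≠ col y ∧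
    col x ∈ lset l.1.1.1 l.1.2.1 ∧ col y ∈ lset l.1.1.1 l.1.2.1 := by
  by_cases hx : col x = 0 <;> by_cases hy : col y = 0
  · rw [pic_00 hx hy] at h; exact absurd h.symm (by simp [kl, k0])
  · rw [pic_0p hx hy] at h; exact absurd h (by simp [kl, kp])
  · rw [pic_p0 hx hy] at h; exact absurd h (by simp [kl, kp])
  · by_cases hxy : col x = col y
    · rw [pic_pp hx hy hxy] at h; exact absurd h (by simp [kl, kp])
    · rw [pic_pq hx hy hxy] at h
      have hll : lineK (col x) (col y) hx hy hxy = l := by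
        simpa [kl] using h
      have := lset_linePair hx hy hxy
      rw [hll] at this
      refine ⟨hx, hy, hxy, ?_, ?_⟩
      · rw [this]; simp [lset]
      · rw [this]; simp [lset]

end Inversion

section CompZero

variable {m : ℕ}

def zerosF : Finset (X m) := (Finset.univ : Finset (Fin 3)).image Sum.inl

lemma mem_zerosF {w : X m} : w ∈ (zerosF : Finset (X m)) ↔ ∃ z, w = Sum.inl z := by
  simp [zerosF, eq_comm]

lemma card_zerosF : (zerosF : Finset (X m)).card = 3 := by
  rw [zerosF, Finset.card_image_of_injective _ Sum.inl_injective, Finset.card_univ,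
    Fintype.card_fin]

lemma inT_zerosF : inT (k0 : Kc m) zerosF := by
  refine ⟨card_zerosF, ?_, ?_⟩
  · apply Finset.sum_eq_zero
    intro w hw
    obtain ⟨z, rfl⟩ := mem_zerosF.1 hw
    rfl
  · intro w hw
    obtain ⟨z, rfl⟩ := mem_zerosF.1 hw
    rfl

lemma mem_cov_k0 {C : Cov (k0 : Kc m)} {b : Finset (X m)} :
    b ∈ C.1 ↔ b = zerosF := by
  constructor
  · intro hb
    have hT := C.2.1 b hb
    have hsub : b ⊆ zerosF := by
      intro w hw
      obtain ⟨z, rfl⟩ := col_zero_inl (hT.2.2 w hw)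
      exact mem_zerosF.2 ⟨z, rfl⟩
    exact Finset.eq_of_subset_of_card_le hsub (by rw [hT.1, card_zerosF])
  · rintro rfl
    have hne : (Sum.inl 0 : X m) ≠ Sum.inl 1 := by
      intro h
      exact absurd (Sum.inl_injective h) (by decide)
    have hpic : pic (Sum.inl 0 : X m) (Sum.inl 1) = k0 := pic_00 rfl rfl
    obtain ⟨b, ⟨hb, -, -⟩, -⟩ := C.2.2 _ _ hne hpic
    have : b = zerosF := by
      have hT := C.2.1 b hb
      have hsub : b ⊆ zerosF := by
        intro w hw
        obtain ⟨z, rfl⟩ := col_zero_inl (hT.2.2 w hw)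
        exact mem_zerosF.2 ⟨z, rfl⟩
      exact Finset.eq_of_subset_of_card_le hsub (by rw [hT.1, card_zerosF])
    exact this ▸ hb

noncomputable instance covFinite (k : Kc m) : Finite (Cov k) := by
  unfold Cov
  infer_instance

lemma card_cov_k0 : Nat.card (Cov (k0 : Kc m)) = 1 := by
  rw [Nat.card_eq_one_iff_unique]
  constructor
  · constructor
    intro C C'
    apply Subtype.ext
    ext b
    rw [mem_cov_k0, mem_cov_k0]
  · refine ⟨⟨{zerosF}, ?_, ?_⟩⟩
    · intro b hb
      rw [Finset.mem_singleton] at hb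
      exact hb ▸ inT_zerosF
    · intro x y hxy hpic
      obtain ⟨hx, hy⟩ := pic_eq_k0 hpic
      obtain ⟨zx, rfl⟩ := col_zero_inl hx
      obtain ⟨zy, rfl⟩ := col_zero_inl hy
      refine ⟨zerosF, ⟨Finset.mem_singleton_self _,
        mem_zerosF.2 ⟨zx, rfl⟩, mem_zerosF.2 ⟨zy, rfl⟩⟩, ?_⟩
      rintro b' ⟨hb', -, -⟩
      exact Finset.mem_singleton.1 hb'

end CompZero

section Helpers

variable {α : Type*} [DecidableEq α]

lemma card_three_distinct {x y z : α} (h1 : x ≠ y) (h2 : x ≠ z) (h3 : y ≠ z) :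
    ({x, y, z} : Finset α).card = 3 := by
  rw [Finset.card_insert_of_notMem (by simp [h1, h2]),
    Finset.card_insert_of_notMem (by simp [h3]), Finset.card_singleton]

lemma triple_swap23 (x y z : α) : ({x, y, z} : Finset α) = {x, z, y} :=
  congrArg (insert x) (Finset.pair_comm y z)

lemma euSymm {β : Type*} {B : Finset (Finset β)} {x y : β}
    (h : ∃! b, b ∈ B ∧ x ∈ b ∧ y ∈ b) : ∃! b, b ∈ B ∧ y ∈ b ∧ x ∈ b := by
  obtain ⟨b, ⟨h1, h2, h3⟩, hu⟩ := h
  exact ⟨b, ⟨h1, h3, h2⟩, fun b' ⟨k1, k2, k3⟩ => hu b' ⟨k1, k3, k2⟩⟩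

end Helpers

section CompP

variable {m : ℕ} {p : Pt m}

def MS : Type := {f : Fin 3 → Fin 4 → Fin 4 //
  (∀ z i, f z (f z i) = i) ∧ (∀ z i, f z i ≠ i) ∧
  ∀ i j : Fin 4, i ≠ j → ∃! z, f z i = j}

lemma inl_ne_inr {z : Fin 3} {q : Pt m} {i : Fin 4} :
    (Sum.inl z : X m) ≠ Sum.inr (q, i) := by simp

lemma inr_inj {q : Pt m} {i j : Fin 4} (h : (Sum.inr (q, i) : X m) = Sum.inr (q, j)) :
    i = j := by
  have := Sum.inr_injective h
  exact congrArg Prod.snd this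

lemma col_inl {z : Fin 3} : col (Sum.inl z : X m) = 0 := rfl

lemma col_inr {q : Pt m} {i : Fin 4} : col (Sum.inr (q, i) : X m) = q.1 := rfl

lemma pic_zp (z : Fin 3) (i : Fin 4) :
    pic (Sum.inl z : X m) (Sum.inr (p, i)) = kp p := by
  rw [pic_0p col_inl (show col (Sum.inr (p, i) : X m) ≠ 0 from p.2)]
  exact congrArg kp (Subtype.ext rfl)

lemma pic_pp' {i j : Fin 4} :
    pic (Sum.inr (p, i) : X m) (Sum.inr (p, j)) = kp p := by
  rw [pic_pp (show col (Sum.inr (p, i) : X m) ≠ 0 from p.2)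
    (show col (Sum.inr (p, j) : X m) ≠ 0 from p.2) rfl]
  exact congrArg kp (Subtype.ext rfl)

lemma shape_kp {b : Finset (X m)} (hb : inT (kp p) b) :
    ∃ (z : Fin 3) (i j : Fin 4), i ≠ j ∧
      b = {Sum.inl z, Sum.inr (p, i), Sum.inr (p, j)} := by
  obtain ⟨h3, hsum, ⟨e, he, hce⟩, hall⟩ := hb
  -- find the zero element
  obtain ⟨u, hu, hcu⟩ : ∃ u ∈ b, col u = 0 := by
    by_contra hcon
    push_neg at hcon
    obtain ⟨x, y, w, hxy, hxw, hyw, rfl⟩ := Finset.card_eq_three.1 h3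
    have hx : col x = p.1 := (hall x (by simp)).resolve_left (hcon x (by simp))
    have hy : col y = p.1 := (hall y (by simp)).resolve_left (hcon y (by simp))
    have hw : col w = p.1 := (hall w (by simp)).resolve_left (hcon w (by simp))
    rw [sum_three hxy hxw hyw col, hx, hy, hw, add_self, zero_add] at hsum
    exact p.2 hsum
  obtain ⟨v, w, hvw, hevw⟩ := Finset.card_eq_two.1
    (show (b.erase u).card = 2 by rw [Finset.card_erase_of_mem hu, h3])
  have hvb : v ∈ b := Finset.mem_of_mem_erase (hevw ▸ Finset.mem_insert_self v {w})
  have hwb : w ∈ b := Finset.mem_of_mem_erase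
    (hevw ▸ Finset.mem_insert_of_mem (Finset.mem_singleton_self w))
  have hvu : v ≠ u := Finset.ne_of_mem_erase (hevw ▸ Finset.mem_insert_self v {w})
  have hwu : w ≠ u := Finset.ne_of_mem_erase
    (hevw ▸ Finset.mem_insert_of_mem (Finset.mem_singleton_self w))
  have hbeq : b = {u, v, w} := by
    rw [← Finset.insert_erase hu, hevw]
  have hcv : col v ≠ 0 := by
    intro hcv0
    have hcw : col w = 0 := by
      rw [hbeq, sum_three (Ne.symm hvu) (Ne.symm hwu) hvw col, hcu, hcv0,
        zero_add, zero_add] at hsum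
      exact hsum
    have : p.1 = 0 := by
      rw [hbeq] at he
      simp only [Finset.mem_insert, Finset.mem_singleton] at he
      rcases he with rfl | rfl | rfl
      · rw [← hce]; exact hcu
      · rw [← hce]; exact hcv0
      · rw [← hce]; exact hcw
    exact p.2 this
  have hcvp : col v = p.1 := (hall v hvb).resolve_left hcv
  have hcwp : col w = p.1 := by
    have h0 : col w = 0 ∨ col w = p.1 := hall w hwb
    rcases h0 with h0 | h0
    · exfalso
      rw [hbeq, sum_three (Ne.symm hvu) (Ne.symm hwu) hvw col, hcu, h0,
        zero_add, add_zero] at hsum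
      exact hcv hsum
    · exact h0
  obtain ⟨z, rfl⟩ := col_zero_inl hcu
  obtain ⟨q1, i, rfl, hq1⟩ := col_ne_inr hcv
  obtain ⟨q2, j, rfl, hq2⟩ := col_ne_inr (show col w ≠ 0 by rw [hcwp]; exact p.2)
  have hq1p : q1 = p := Subtype.ext (hq1.trans hcvp)
  have hq2p : q2 = p := Subtype.ext (hq2.trans hcwp)
  subst hq1p hq2p
  have hij : i ≠ j := fun h => hvw (by rw [h])
  exact ⟨z, i, j, hij, hbeq⟩

/-- the unique partner of `i` in the block through `inl z` and `inr (p, i)` -/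
lemma kp_third (C : Cov (kp p)) (z : Fin 3) (i : Fin 4) :
    ∃! j : Fin 4, j ≠ i ∧
      ({Sum.inl z, Sum.inr (p, i), Sum.inr (p, j)} : Finset (X m)) ∈ C.1 := by
  obtain ⟨b, ⟨hbC, hxb, hyb⟩, huniq⟩ := C.2.2 (Sum.inl z) (Sum.inr (p, i))
    inl_ne_inr (pic_zp z i)
  obtain ⟨z', i', j', hij', hbeq⟩ := shape_kp (C.2.1 b hbC)
  have hz : z' = z := by
    rw [hbeq] at hxb
    simp only [Finset.mem_insert, Finset.mem_singleton] at hxb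
    rcases hxb with h | h | h
    · exact (Sum.inl_injective h).symm
    · exact absurd h (by simp)
    · exact absurd h (by simp)
  rw [hz] at hbeq
  rw [hbeq] at hyb
  simp only [Finset.mem_insert, Finset.mem_singleton] at hyb
  have huniq2 : ∀ j : Fin 4, j ≠ i →
      ({Sum.inl z, Sum.inr (p, i), Sum.inr (p, j)} : Finset (X m)) ∈ C.1 →
      ({Sum.inl z, Sum.inr (p, i), Sum.inr (p, j)} : Finset (X m)) = b := by
    intro j hji hj
    exact huniq _ ⟨hj, by simp, by simp⟩
  rcases hyb with h | h | h
  · exact absurd h (by simp)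
  · -- i = i'
    have hii : i = i' := inr_inj h
    subst hii
    refine ⟨j', ⟨Ne.symm hij', by rw [← hbeq]; exact hbC⟩, ?_⟩
    rintro j ⟨hji, hj⟩
    have := (huniq2 j hji hj).trans hbeq
    -- extract j = j'
    have hmem : (Sum.inr (p, j) : X m) ∈
        ({Sum.inl z, Sum.inr (p, i), Sum.inr (p, j')} : Finset (X m)) := by
      rw [← this]; simp
    simp only [Finset.mem_insert, Finset.mem_singleton] at hmem
    rcases hmem with h2 | h2 | h2
    · exact absurd h2 (by simp)
    · exact absurd (inr_inj h2) hji
    · exact inr_inj h2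
  · -- i = j'
    have hii : i = j' := inr_inj h
    subst hii
    have hbeq2 : b = {Sum.inl z, Sum.inr (p, i), Sum.inr (p, i')} := by
      rw [hbeq, triple_swap23]
    refine ⟨i', ⟨hij', by rw [← hbeq2]; exact hbC⟩, ?_⟩
    rintro j ⟨hji, hj⟩
    have := (huniq2 j hji hj).trans hbeq2
    have hmem : (Sum.inr (p, j) : X m) ∈
        ({Sum.inl z, Sum.inr (p, i), Sum.inr (p, i')} : Finset (X m)) := by
      rw [← this]; simp
    simp only [Finset.mem_insert, Finset.mem_singleton] at hmem
    rcases hmem with h2 | h2 | h2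
    · exact absurd h2 (by simp)
    · exact absurd (inr_inj h2) hji
    · exact inr_inj h2

noncomputable def kpF (C : Cov (kp p)) (z : Fin 3) (i : Fin 4) : Fin 4 :=
  (kp_third C z i).exists.choose

lemma kpF_spec (C : Cov (kp p)) (z : Fin 3) (i : Fin 4) :
    kpF C z i ≠ i ∧
    ({Sum.inl z, Sum.inr (p, i), Sum.inr (p, kpF C z i)} : Finset (X m)) ∈ C.1 :=
  (kp_third C z i).exists.choose_spec

lemma kpF_unique (C : Cov (kp p)) (z : Fin 3) (i j : Fin 4) (hji : j ≠ i)
    (hj : ({Sum.inl z, Sum.inr (p, i), Sum.inr (p, j)} : Finset (X m)) ∈ C.1) :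
    kpF C z i = j :=
  ((kp_third C z i).unique (kpF_spec C z i) ⟨hji, hj⟩)


lemma kpF_invol (C : Cov (kp p)) (z : Fin 3) (i : Fin 4) :
    kpF C z (kpF C z i) = i := by
  obtain ⟨hne, hmem⟩ := kpF_spec C z i
  apply kpF_unique C z (kpF C z i) i (Ne.symm hne)
  rw [triple_swap23]
  exact hmem

lemma kpF_exu (C : Cov (kp p)) (i j : Fin 4) (hij : i ≠ j) :
    ∃! z, kpF C z i = j := by
  obtain ⟨b, ⟨hbC, hxb, hyb⟩, huniq⟩ := C.2.2 (Sum.inr (p, i)) (Sum.inr (p, j))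
    (fun h => hij (inr_inj h)) pic_pp'
  obtain ⟨z, i', j', hij', hbeq⟩ := shape_kp (C.2.1 b hbC)
  rw [hbeq] at hxb hyb
  simp only [Finset.mem_insert, Finset.mem_singleton] at hxb hyb
  have hxb' : i = i' ∨ i = j' := by
    rcases hxb with h | h | h
    · exact absurd h (by simp)
    · exact Or.inl (inr_inj h)
    · exact Or.inr (inr_inj h)
  have hyb' : j = i' ∨ j = j' := by
    rcases hyb with h | h | h
    · exact absurd h (by simp)
    · exact Or.inl (inr_inj h)
    · exact Or.inr (inr_inj h)
  have hb2 : b = {Sum.inl z, Sum.inr (p, i), Sum.inr (p, j)} := by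
    rcases hxb' with rfl | rfl <;> rcases hyb' with rfl | rfl
    · exact absurd rfl hij
    · exact hbeq
    · rw [hbeq, triple_swap23]
    · exact absurd rfl hij
  have hzval : kpF C z i = j := kpF_unique C z i j (Ne.symm hij) (hb2 ▸ hbC)
  refine ⟨z, hzval, ?_⟩
  intro z₂ hz₂
  have hmem₂ := (kpF_spec C z₂ i).2
  rw [hz₂] at hmem₂
  have : ({Sum.inl z₂, Sum.inr (p, i), Sum.inr (p, j)} : Finset (X m)) = b :=
    huniq _ ⟨hmem₂, by simp, by simp⟩
  rw [hb2] at this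
  have hmem3 : (Sum.inl z₂ : X m) ∈
      ({Sum.inl z, Sum.inr (p, i), Sum.inr (p, j)} : Finset (X m)) := by
    rw [← this]; simp
  simp only [Finset.mem_insert, Finset.mem_singleton] at hmem3
  rcases hmem3 with h | h | h
  · exact Sum.inl_injective h
  · exact absurd h (by simp)
  · exact absurd h (by simp)

noncomputable def msOf (C : Cov (kp p)) : MS :=
  ⟨kpF C, fun z i => kpF_invol C z i, fun z i => (kpF_spec C z i).1, kpF_exu C⟩

def bOf (p : Pt m) (F : MS) : Finset (Finset (X m)) :=
  Finset.univ.image (fun zi : Fin 3 × Fin 4 =>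
    ({Sum.inl zi.1, Sum.inr (p, zi.2), Sum.inr (p, F.1 zi.1 zi.2)} : Finset (X m)))

lemma mem_bOf {F : MS} {b : Finset (X m)} :
    b ∈ bOf p F ↔ ∃ z i,
      b = {Sum.inl z, Sum.inr (p, i), Sum.inr (p, F.1 z i)} := by
  simp only [bOf, Finset.mem_image, Finset.mem_univ, true_and, Prod.exists]
  constructor
  · rintro ⟨z, i, rfl⟩; exact ⟨z, i, rfl⟩
  · rintro ⟨z, i, rfl⟩; exact ⟨z, i, rfl⟩

lemma inT_bOf (F : MS) {b : Finset (X m)} (hb : b ∈ bOf p F) : inT (kp p) b := by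
  obtain ⟨z, i, rfl⟩ := mem_bOf.1 hb
  have hij : (Sum.inr (p, i) : X m) ≠ Sum.inr (p, F.1 z i) :=
    fun h => (F.2.2.1 z i) (inr_inj h).symm
  refine ⟨card_three_distinct inl_ne_inr inl_ne_inr hij, ?_, ⟨Sum.inr (p, i), by simp, rfl⟩, ?_⟩
  · rw [sum_three inl_ne_inr inl_ne_inr hij col, col_inl, col_inr, col_inr,
      zero_add, add_self]
  · intro w hw
    simp only [Finset.mem_insert, Finset.mem_singleton] at hw
    rcases hw with rfl | rfl | rfl
    · exact Or.inl rfl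
    · exact Or.inr rfl
    · exact Or.inr rfl

lemma cover_bOf_zp (F : MS) (z : Fin 3) (i : Fin 4) :
    ∃! b, b ∈ bOf p F ∧ (Sum.inl z : X m) ∈ b ∧ (Sum.inr (p, i) : X m) ∈ b := by
  refine ⟨{Sum.inl z, Sum.inr (p, i), Sum.inr (p, F.1 z i)},
    ⟨mem_bOf.2 ⟨z, i, rfl⟩, by simp, by simp⟩, ?_⟩
  rintro b' ⟨hb', hzb', hib'⟩
  obtain ⟨z', i', rfl⟩ := mem_bOf.1 hb'
  simp only [Finset.mem_insert, Finset.mem_singleton] at hzb' hib'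
  have hz : z' = z := by
    rcases hzb' with h | h | h
    · exact (Sum.inl_injective h).symm
    · exact absurd h (by simp)
    · exact absurd h (by simp)
  subst hz
  have hi : i = i' ∨ i = F.1 z' i' := by
    rcases hib' with h | h | h
    · exact absurd h (by simp)
    · exact Or.inl (inr_inj h)
    · exact Or.inr (inr_inj h)
  rcases hi with rfl | hi
  · rfl
  · rw [hi, F.2.1 z' i']
    exact triple_swap23 _ _ _

noncomputable def covKp (F : MS) : Cov (kp p) := by
  refine ⟨bOf p F, fun b hb => inT_bOf F hb, ?_⟩
  intro x y hxy hpic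
  rcases pic_eq_kp hpic with ⟨hx0, hyp⟩ | ⟨hy0, hxp⟩ | ⟨hxp, hyp⟩
  · obtain ⟨z, rfl⟩ := col_zero_inl hx0
    obtain ⟨q, i, rfl, hq⟩ := col_ne_inr (show col y ≠ 0 by rw [hyp]; exact p.2)
    have hqp : q = p := Subtype.ext (hq.trans hyp)
    rw [hqp]
    exact cover_bOf_zp F z i
  · obtain ⟨z, rfl⟩ := col_zero_inl hy0
    obtain ⟨q, i, rfl, hq⟩ := col_ne_inr (show col x ≠ 0 by rw [hxp]; exact p.2)
    have hqp : q = p := Subtype.ext (hq.trans hxp)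
    rw [hqp]
    exact euSymm (cover_bOf_zp F z i)
  · obtain ⟨q1, i, rfl, hq1⟩ := col_ne_inr (show col x ≠ 0 by rw [hxp]; exact p.2)
    obtain ⟨q2, j, rfl, hq2⟩ := col_ne_inr (show col y ≠ 0 by rw [hyp]; exact p.2)
    have hq1p : q1 = p := Subtype.ext (hq1.trans hxp)
    have hq2p : q2 = p := Subtype.ext (hq2.trans hyp)
    rw [hq1p] at hxy ⊢
    rw [hq2p] at hxy ⊢
    have hij : i ≠ j := fun h => hxy (by rw [h])
    obtain ⟨z, hz, hzu⟩ := F.2.2.2 i j hij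
    refine ⟨{Sum.inl z, Sum.inr (p, i), Sum.inr (p, F.1 z i)},
      ⟨mem_bOf.2 ⟨z, i, rfl⟩, by simp, by rw [hz]; simp⟩, ?_⟩
    rintro b' ⟨hb', hib', hjb'⟩
    obtain ⟨z', i', rfl⟩ := mem_bOf.1 hb'
    simp only [Finset.mem_insert, Finset.mem_singleton] at hib' hjb'
    have hi : i = i' ∨ i = F.1 z' i' := by
      rcases hib' with h | h | h
      · exact absurd h (by simp)
      · exact Or.inl (inr_inj h)
      · exact Or.inr (inr_inj h)
    have hj : j = i' ∨ j = F.1 z' i' := by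
      rcases hjb' with h | h | h
      · exact absurd h (by simp)
      · exact Or.inl (inr_inj h)
      · exact Or.inr (inr_inj h)
    rcases hi with rfl | hi <;> rcases hj with rfl | hj
    · exact absurd rfl hij
    · -- i = i', j = F z' i
      have hzz : z' = z := hzu z' hj.symm
      subst hzz
      rfl
    · -- j = i', i = F z' j
      have hfi : F.1 z' i = j := by rw [hi, F.2.1]
      have hzz : z' = z := hzu z' hfi
      subst hzz
      have hFzj : F.1 z' j = i := by rw [← hfi, F.2.1]
      rw [hFzj, hfi]
      exact triple_swap23 _ _ _
    · exact absurd (hi.trans hj.symm) hij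

lemma covKp_left (C : Cov (kp p)) : covKp (msOf C) = C := by
  apply Subtype.ext
  show bOf p (msOf C) = C.1
  ext b
  constructor
  · intro hb
    obtain ⟨z, i, rfl⟩ := (mem_bOf (F := msOf C)).1 hb
    exact (kpF_spec C z i).2
  · intro hb
    obtain ⟨z, i, j, hij, rfl⟩ := shape_kp (C.2.1 b hb)
    have : kpF C z i = j := kpF_unique C z i j (Ne.symm hij) hb
    exact (mem_bOf (F := msOf C)).2 ⟨z, i, by rw [← this]; rfl⟩

lemma covKp_right (F : MS) : msOf (covKp (p := p) F) = F := by
  apply Subtype.ext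
  funext z i
  show kpF (covKp F) z i = F.1 z i
  apply kpF_unique
  · exact F.2.2.1 z i
  · exact mem_bOf.2 ⟨z, i, rfl⟩

noncomputable def covKpEquiv : Cov (kp p) ≃ MS where
  toFun := msOf
  invFun := covKp
  left_inv := covKp_left
  right_inv := covKp_right

abbrev I3 : Type := {f : Fin 4 → Fin 4 // (∀ i, f (f i) = i) ∧ ∀ i, f i ≠ i}

lemma cardI3 : Fintype.card I3 = 3 := by decide

lemma exI3 : ∀ i j : Fin 4, i ≠ j → ∃ h : I3, h.1 i = j := by decide

lemma uniqI3 : ∀ i j : Fin 4, ∀ h h' : I3, h.1 i = j → h'.1 i = j → h = h' := by decide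

noncomputable def msEmb : MS ≃ (Fin 3 ↪ I3) where
  toFun F := ⟨fun z => ⟨F.1 z, fun i => F.2.1 z i, fun i => F.2.2.1 z i⟩, by
    intro z z' h
    have hv : F.1 z 0 = F.1 z' 0 := by
      have := congrArg Subtype.val h
      exact congrFun this 0
    obtain ⟨w, hw, hwu⟩ := F.2.2.2 0 (F.1 z 0) (Ne.symm (F.2.2.1 z 0))
    rw [hwu z rfl, hwu z' hv.symm]⟩
  invFun g := ⟨fun z => (g z).1, fun z => (g z).2.1, fun z => (g z).2.2, by
    intro i j hij
    have hbij : Function.Bijective g :=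
      (Fintype.bijective_iff_injective_and_card g).2 ⟨g.injective, by rw [cardI3]; rfl⟩
    obtain ⟨h, hh⟩ := exI3 i j hij
    obtain ⟨z, rfl⟩ := hbij.2 h
    refine ⟨z, hh, ?_⟩
    intro z' hz'
    exact g.injective (uniqI3 i j (g z') (g z) hz' hh)⟩
  left_inv F := rfl
  right_inv g := by
    ext z i
    rfl

lemma card_MS : Nat.card MS = 6 := by
  rw [Nat.card_congr msEmb, Nat.card_eq_fintype_card, Fintype.card_embedding_eq,
    cardI3, Fintype.card_fin]
  rfl

lemma card_cov_kp (p : Pt m) : Nat.card (Cov (kp p)) = 6 := by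
  rw [Nat.card_congr (covKpEquiv (p := p)), card_MS]

end CompP

section CompL

variable {m : ℕ} {l : Ltt m}

def QL : Type := {F : Fin 4 → Fin 4 → Fin 4 //
  (∀ i, Function.Injective (F i)) ∧ (∀ j, Function.Injective (fun i => F i j)) ∧
  (∀ i k, ∃ j, F i j = k) ∧ (∀ j k, ∃ i, F i j = k)}

lemma inrP_inj {u v : Pt m} {i j : Fin 4} (h : (Sum.inr (u, i) : X m) = Sum.inr (v, j)) :
    u = v ∧ i = j := by
  have := Sum.inr_injective h
  exact ⟨congrArg Prod.fst this, congrArg Prod.snd this⟩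

lemma inr_ne_of_ne {u v : Pt m} {i j : Fin 4} (huv : u ≠ v) :
    (Sum.inr (u, i) : X m) ≠ Sum.inr (v, j) :=
  fun h => huv (inrP_inj h).1

lemma l12_ne : (l.1.1 : Pt m) ≠ l.1.2 := fun h => l_ne l (congrArg Subtype.val h)

lemma l13_ne : (l.1.1 : Pt m) ≠ l3 l :=
  fun h => left_ne_add l.1.2.2 (congrArg Subtype.val h)

lemma l23_ne : (l.1.2 : Pt m) ≠ l3 l :=
  fun h => right_ne_add l.1.1.2 (congrArg Subtype.val h)

lemma mem_lset_l1 : (l.1.1 : Pt m).1 ∈ lset l.1.1.1 l.1.2.1 := by simp [lset]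

lemma mem_lset_l2 : (l.1.2 : Pt m).1 ∈ lset l.1.1.1 l.1.2.1 := by simp [lset]

lemma mem_lset_l3 : (l3 l : Pt m).1 ∈ lset l.1.1.1 l.1.2.1 := by
  simp [lset, l3]

lemma pic_kl_cross {u v : Pt m} (hu : u.1 ∈ lset l.1.1.1 l.1.2.1)
    (hv : v.1 ∈ lset l.1.1.1 l.1.2.1) (huv : u.1 ≠ v.1) (i j : Fin 4) :
    pic (Sum.inr (u, i) : X m) (Sum.inr (v, j)) = kl l := by
  rw [pic_pq (show col (Sum.inr (u, i) : X m) ≠ 0 from u.2)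
    (show col (Sum.inr (v, j) : X m) ≠ 0 from v.2) huv]
  apply congrArg kl
  exact (lineK_of_mem_lset hu hv huv l.1.1.2 l.1.2.2 (l_ne l)).trans (lineK_canon l)

lemma shape_kl {b : Finset (X m)} (hb : inT (kl l) b) :
    ∃ i j k : Fin 4,
      b = {Sum.inr (l.1.1, i), Sum.inr (l.1.2, j), Sum.inr (l3 l, k)} := by
  obtain ⟨h3, hsum, ⟨xp, hxp, hcxp⟩, ⟨xq, hxq, hcxq⟩, hall⟩ := hb
  have hpq : xp ≠ xq := by
    intro h
    rw [h, hcxq] at hcxp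
    exact l_ne l hcxp.symm
  obtain ⟨z, hzb, hzp, hzq, hbeq, -⟩ := third_spec h3 hxp hxq hpq
  have hcz : col z = (l3 l).1 := by
    rw [hbeq, sum_three hpq (Ne.symm hzp) (Ne.symm hzq) col, hcxp, hcxq] at hsum
    exact (eq_of_add_eq_zero hsum).symm
  obtain ⟨q1, i, rfl, hq1⟩ := col_ne_inr (show col xp ≠ 0 by rw [hcxp]; exact l.1.1.2)
  obtain ⟨q2, j, rfl, hq2⟩ := col_ne_inr (show col xq ≠ 0 by rw [hcxq]; exact l.1.2.2)
  obtain ⟨q3, k, rfl, hq3⟩ := col_ne_inr (show col z ≠ 0 by rw [hcz]; exact (l3 l).2)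
  have e1 : q1 = l.1.1 := Subtype.ext (hq1.trans hcxp)
  have e2 : q2 = l.1.2 := Subtype.ext (hq2.trans hcxq)
  have e3 : q3 = l3 l := Subtype.ext (hq3.trans hcz)
  rw [e1, e2, e3] at hbeq
  exact ⟨i, j, k, hbeq⟩

lemma kl_third (C : Cov (kl l)) (i j : Fin 4) :
    ∃! k : Fin 4,
      ({Sum.inr (l.1.1, i), Sum.inr (l.1.2, j), Sum.inr (l3 l, k)} : Finset (X m)) ∈ C.1 := by
  obtain ⟨b, ⟨hbC, hxb, hyb⟩, huniq⟩ := C.2.2 (Sum.inr (l.1.1, i)) (Sum.inr (l.1.2, j))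
    (inr_ne_of_ne l12_ne) (pic_kl_cross mem_lset_l1 mem_lset_l2 (l_ne l) i j)
  obtain ⟨i', j', k', hbeq⟩ := shape_kl (C.2.1 b hbC)
  rw [hbeq] at hxb hyb
  simp only [Finset.mem_insert, Finset.mem_singleton] at hxb hyb
  have hi : i = i' := by
    rcases hxb with h | h | h
    · exact (inrP_inj h).2
    · exact absurd (inrP_inj h).1 l12_ne
    · exact absurd (inrP_inj h).1 l13_ne
  have hj : j = j' := by
    rcases hyb with h | h | h
    · exact absurd (inrP_inj h).1 (Ne.symm l12_ne)
    · exact (inrP_inj h).2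
    · exact absurd (inrP_inj h).1 l23_ne
  subst hi; subst hj
  refine ⟨k', show ({Sum.inr (l.1.1, i), Sum.inr (l.1.2, j), Sum.inr (l3 l, k')} :
    Finset (X m)) ∈ C.1 from hbeq ▸ hbC, ?_⟩
  intro k₂ hk₂
  have hbb : ({Sum.inr (l.1.1, i), Sum.inr (l.1.2, j), Sum.inr (l3 l, k₂)} : Finset (X m)) = b :=
    huniq _ ⟨hk₂, by simp, by simp⟩
  rw [hbeq] at hbb
  have hmem : (Sum.inr (l3 l, k₂) : X m) ∈
      ({Sum.inr (l.1.1, i), Sum.inr (l.1.2, j), Sum.inr (l3 l, k')} : Finset (X m)) := by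
    rw [← hbb]; simp
  simp only [Finset.mem_insert, Finset.mem_singleton] at hmem
  rcases hmem with h | h | h
  · exact absurd (inrP_inj h).1 (Ne.symm l13_ne)
  · exact absurd (inrP_inj h).1 (Ne.symm l23_ne)
  · exact (inrP_inj h).2

noncomputable def klF (C : Cov (kl l)) (i j : Fin 4) : Fin 4 :=
  (kl_third C i j).exists.choose

lemma klF_spec (C : Cov (kl l)) (i j : Fin 4) :
    ({Sum.inr (l.1.1, i), Sum.inr (l.1.2, j), Sum.inr (l3 l, klF C i j)} : Finset (X m)) ∈ C.1 :=
  (kl_third C i j).exists.choose_spec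

lemma klF_unique (C : Cov (kl l)) {i j k : Fin 4}
    (h : ({Sum.inr (l.1.1, i), Sum.inr (l.1.2, j), Sum.inr (l3 l, k)} : Finset (X m)) ∈ C.1) :
    klF C i j = k :=
  (kl_third C i j).unique (klF_spec C i j) h

lemma klF_row_inj (C : Cov (kl l)) (i : Fin 4) : Function.Injective (klF C i) := by
  intro j j' h
  have h1 := klF_spec C i j
  have h2 := klF_spec C i j'
  rw [← h] at h2
  obtain ⟨b, ⟨hbC, hxb, hyb⟩, huniq⟩ := C.2.2 (Sum.inr (l.1.1, i))
    (Sum.inr (l3 l, klF C i j))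
    (inr_ne_of_ne l13_ne) (pic_kl_cross mem_lset_l1 mem_lset_l3
      (fun hh => left_ne_add l.1.2.2 hh) i (klF C i j))
  have e1 := huniq _ ⟨h1, by simp, by simp⟩
  have e2 := huniq _ ⟨h2, by simp, by simp⟩
  have e3 := e1.trans e2.symm
  have hmem : (Sum.inr (l.1.2, j) : X m) ∈
      ({Sum.inr (l.1.1, i), Sum.inr (l.1.2, j'), Sum.inr (l3 l, klF C i j)} : Finset (X m)) := by
    rw [← e3]; simp
  simp only [Finset.mem_insert, Finset.mem_singleton] at hmem
  rcases hmem with hh | hh | hh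
  · exact absurd (inrP_inj hh).1 (Ne.symm l12_ne)
  · exact (inrP_inj hh).2
  · exact absurd (inrP_inj hh).1 l23_ne

lemma klF_col_inj (C : Cov (kl l)) (j : Fin 4) :
    Function.Injective (fun i => klF C i j) := by
  intro i i' h
  simp only at h
  have h1 := klF_spec C i j
  have h2 := klF_spec C i' j
  rw [← h] at h2
  obtain ⟨b, ⟨hbC, hxb, hyb⟩, huniq⟩ := C.2.2 (Sum.inr (l.1.2, j))
    (Sum.inr (l3 l, klF C i j))
    (inr_ne_of_ne l23_ne) (pic_kl_cross mem_lset_l2 mem_lset_l3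
      (fun hh => right_ne_add l.1.1.2 hh) j (klF C i j))
  have e1 := huniq _ ⟨h1, by simp, by simp⟩
  have e2 := huniq _ ⟨h2, by simp, by simp⟩
  have e3 := e1.trans e2.symm
  have hmem : (Sum.inr (l.1.1, i) : X m) ∈
      ({Sum.inr (l.1.1, i'), Sum.inr (l.1.2, j), Sum.inr (l3 l, klF C i j)} : Finset (X m)) := by
    rw [← e3]; simp
  simp only [Finset.mem_insert, Finset.mem_singleton] at hmem
  rcases hmem with hh | hh | hh
  · exact (inrP_inj hh).2
  · exact absurd (inrP_inj hh).1 l12_ne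
  · exact absurd (inrP_inj hh).1 l13_ne

lemma klF_row_surj (C : Cov (kl l)) (i k : Fin 4) : ∃ j, klF C i j = k := by
  obtain ⟨b, ⟨hbC, hxb, hyb⟩, -⟩ := C.2.2 (Sum.inr (l.1.1, i)) (Sum.inr (l3 l, k))
    (inr_ne_of_ne l13_ne) (pic_kl_cross mem_lset_l1 mem_lset_l3
      (fun hh => left_ne_add l.1.2.2 hh) i k)
  obtain ⟨i', j', k', hbeq⟩ := shape_kl (C.2.1 b hbC)
  rw [hbeq] at hxb hyb
  simp only [Finset.mem_insert, Finset.mem_singleton] at hxb hyb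
  have hi : i = i' := by
    rcases hxb with h | h | h
    · exact (inrP_inj h).2
    · exact absurd (inrP_inj h).1 l12_ne
    · exact absurd (inrP_inj h).1 l13_ne
  have hk : k = k' := by
    rcases hyb with h | h | h
    · exact absurd (inrP_inj h).1 (Ne.symm l13_ne)
    · exact absurd (inrP_inj h).1 (Ne.symm l23_ne)
    · exact (inrP_inj h).2
  subst hi
  subst hk
  exact ⟨j', klF_unique C (hbeq ▸ hbC)⟩

lemma klF_col_surj (C : Cov (kl l)) (j k : Fin 4) : ∃ i, klF C i j = k := by
  obtain ⟨b, ⟨hbC, hxb, hyb⟩, -⟩ := C.2.2 (Sum.inr (l.1.2, j)) (Sum.inr (l3 l, k))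
    (inr_ne_of_ne l23_ne) (pic_kl_cross mem_lset_l2 mem_lset_l3
      (fun hh => right_ne_add l.1.1.2 hh) j k)
  obtain ⟨i', j', k', hbeq⟩ := shape_kl (C.2.1 b hbC)
  rw [hbeq] at hxb hyb
  simp only [Finset.mem_insert, Finset.mem_singleton] at hxb hyb
  have hj : j = j' := by
    rcases hxb with h | h | h
    · exact absurd (inrP_inj h).1 (Ne.symm l12_ne)
    · exact (inrP_inj h).2
    · exact absurd (inrP_inj h).1 l23_ne
  have hk : k = k' := by
    rcases hyb with h | h | h
    · exact absurd (inrP_inj h).1 (Ne.symm l13_ne)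
    · exact absurd (inrP_inj h).1 (Ne.symm l23_ne)
    · exact (inrP_inj h).2
  subst hj
  subst hk
  exact ⟨i', klF_unique C (hbeq ▸ hbC)⟩

noncomputable def qlOf (C : Cov (kl l)) : QL :=
  ⟨klF C, klF_row_inj C, klF_col_inj C, klF_row_surj C, klF_col_surj C⟩

noncomputable def bOfL (l : Ltt m) (F : QL) : Finset (Finset (X m)) :=
  Finset.univ.image (fun ij : Fin 4 × Fin 4 =>
    ({Sum.inr (l.1.1, ij.1), Sum.inr (l.1.2, ij.2),
      Sum.inr (l3 l, F.1 ij.1 ij.2)} : Finset (X m)))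

lemma mem_bOfL {F : QL} {b : Finset (X m)} :
    b ∈ bOfL l F ↔ ∃ i j, b = {Sum.inr (l.1.1, i), Sum.inr (l.1.2, j),
      Sum.inr (l3 l, F.1 i j)} := by
  simp only [bOfL, Finset.mem_image, Finset.mem_univ, true_and, Prod.exists]
  constructor
  · rintro ⟨i, j, rfl⟩; exact ⟨i, j, rfl⟩
  · rintro ⟨i, j, rfl⟩; exact ⟨i, j, rfl⟩

lemma inT_bOfL (F : QL) {b : Finset (X m)} (hb : b ∈ bOfL l F) : inT (kl l) b := by
  obtain ⟨i, j, rfl⟩ := mem_bOfL.1 hb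
  refine ⟨card_three_distinct (inr_ne_of_ne l12_ne) (inr_ne_of_ne l13_ne)
    (inr_ne_of_ne l23_ne), ?_, ⟨Sum.inr (l.1.1, i), by simp, rfl⟩,
    ⟨Sum.inr (l.1.2, j), by simp, rfl⟩, ?_⟩
  · rw [sum_three (inr_ne_of_ne l12_ne) (inr_ne_of_ne l13_ne) (inr_ne_of_ne l23_ne) col]
    show l.1.1.1 + l.1.2.1 + (l3 l).1 = 0
    rw [show (l3 l).1 = l.1.1.1 + l.1.2.1 from rfl, add_self]
  · intro w hw
    simp only [Finset.mem_insert, Finset.mem_singleton] at hw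
    rcases hw with rfl | rfl | rfl
    · exact mem_lset_l1
    · exact mem_lset_l2
    · exact mem_lset_l3

lemma cover_bOfL_12 (F : QL) (i j : Fin 4) :
    ∃! b, b ∈ bOfL l F ∧ (Sum.inr (l.1.1, i) : X m) ∈ b ∧
      (Sum.inr (l.1.2, j) : X m) ∈ b := by
  refine ⟨{Sum.inr (l.1.1, i), Sum.inr (l.1.2, j), Sum.inr (l3 l, F.1 i j)},
    ⟨mem_bOfL.2 ⟨i, j, rfl⟩, by simp, by simp⟩, ?_⟩
  rintro b' ⟨hb', h1, h2⟩
  obtain ⟨i', j', rfl⟩ := mem_bOfL.1 hb'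
  simp only [Finset.mem_insert, Finset.mem_singleton] at h1 h2
  have hi : i = i' := by
    rcases h1 with h | h | h
    · exact (inrP_inj h).2
    · exact absurd (inrP_inj h).1 l12_ne
    · exact absurd (inrP_inj h).1 l13_ne
  have hj : j = j' := by
    rcases h2 with h | h | h
    · exact absurd (inrP_inj h).1 (Ne.symm l12_ne)
    · exact (inrP_inj h).2
    · exact absurd (inrP_inj h).1 l23_ne
  rw [hi, hj]

lemma cover_bOfL_13 (F : QL) (i k : Fin 4) :
    ∃! b, b ∈ bOfL l F ∧ (Sum.inr (l.1.1, i) : X m) ∈ b ∧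
      (Sum.inr (l3 l, k) : X m) ∈ b := by
  obtain ⟨j, hj⟩ := F.2.2.2.1 i k
  refine ⟨{Sum.inr (l.1.1, i), Sum.inr (l.1.2, j), Sum.inr (l3 l, F.1 i j)},
    ⟨mem_bOfL.2 ⟨i, j, rfl⟩, by simp, by rw [hj]; simp⟩, ?_⟩
  rintro b' ⟨hb', h1, h2⟩
  obtain ⟨i', j', rfl⟩ := mem_bOfL.1 hb'
  simp only [Finset.mem_insert, Finset.mem_singleton] at h1 h2
  have hi : i = i' := by
    rcases h1 with h | h | h
    · exact (inrP_inj h).2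
    · exact absurd (inrP_inj h).1 l12_ne
    · exact absurd (inrP_inj h).1 l13_ne
  subst hi
  have hk : F.1 i j' = k := by
    rcases h2 with h | h | h
    · exact absurd (inrP_inj h).1 (Ne.symm l13_ne)
    · exact absurd (inrP_inj h).1 (Ne.symm l23_ne)
    · exact ((inrP_inj h).2).symm
  have : j' = j := F.2.1 i (hk.trans hj.symm)
  rw [this]

lemma cover_bOfL_23 (F : QL) (j k : Fin 4) :
    ∃! b, b ∈ bOfL l F ∧ (Sum.inr (l.1.2, j) : X m) ∈ b ∧
      (Sum.inr (l3 l, k) : X m) ∈ b := by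
  obtain ⟨i, hi⟩ := F.2.2.2.2 j k
  refine ⟨{Sum.inr (l.1.1, i), Sum.inr (l.1.2, j), Sum.inr (l3 l, F.1 i j)},
    ⟨mem_bOfL.2 ⟨i, j, rfl⟩, by simp, by rw [hi]; simp⟩, ?_⟩
  rintro b' ⟨hb', h1, h2⟩
  obtain ⟨i', j', rfl⟩ := mem_bOfL.1 hb'
  simp only [Finset.mem_insert, Finset.mem_singleton] at h1 h2
  have hj : j = j' := by
    rcases h1 with h | h | h
    · exact absurd (inrP_inj h).1 (Ne.symm l12_ne)
    · exact (inrP_inj h).2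
    · exact absurd (inrP_inj h).1 l23_ne
  subst hj
  have hk : F.1 i' j = k := by
    rcases h2 with h | h | h
    · exact absurd (inrP_inj h).1 (Ne.symm l13_ne)
    · exact absurd (inrP_inj h).1 (Ne.symm l23_ne)
    · exact ((inrP_inj h).2).symm
  have : i' = i := F.2.2.1 j (show F.1 i' j = F.1 i j from hk.trans hi.symm)
  rw [this]

lemma lset_elem_cases {u : Pt m} (hu : u.1 ∈ lset l.1.1.1 l.1.2.1) :
    u = l.1.1 ∨ u = l.1.2 ∨ u = l3 l := by
  simp only [lset, Finset.mem_insert, Finset.mem_singleton] at hu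
  rcases hu with h | h | h
  · exact Or.inl (Subtype.ext h)
  · exact Or.inr (Or.inl (Subtype.ext h))
  · exact Or.inr (Or.inr (Subtype.ext h))

noncomputable def covKl (F : QL) : Cov (kl l) := by
  refine ⟨bOfL l F, fun b hb => inT_bOfL F hb, ?_⟩
  intro x y hxy hpic
  obtain ⟨hx0, hy0, hxy', hxl, hyl⟩ := pic_eq_kl hpic
  obtain ⟨u, a, rfl, hu⟩ := col_ne_inr hx0
  obtain ⟨v, c, rfl, hv⟩ := col_ne_inr hy0
  rw [← hu] at hxl
  rw [← hv] at hyl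
  have huv : u.1 ≠ v.1 := by
    rw [show u.1 = col (Sum.inr (u, a) : X m) from hu,
      show v.1 = col (Sum.inr (v, c) : X m) from hv]
    exact hxy'
  rcases lset_elem_cases (l := l) hxl with rfl | rfl | rfl <;>
    rcases lset_elem_cases (l := l) hyl with rfl | rfl | rfl
  · exact absurd rfl huv
  · exact cover_bOfL_12 F a c
  · exact cover_bOfL_13 F a c
  · exact euSymm (cover_bOfL_12 F c a)
  · exact absurd rfl huv
  · exact cover_bOfL_23 F a c
  · exact euSymm (cover_bOfL_13 F c a)
  · exact euSymm (cover_bOfL_23 F c a)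
  · exact absurd rfl huv

lemma covKl_left (C : Cov (kl l)) : covKl (qlOf C) = C := by
  apply Subtype.ext
  show bOfL l (qlOf C) = C.1
  ext b
  constructor
  · intro hb
    obtain ⟨i, j, rfl⟩ := (mem_bOfL (F := qlOf C)).1 hb
    exact klF_spec C i j
  · intro hb
    obtain ⟨i, j, k, rfl⟩ := shape_kl (C.2.1 b hb)
    have : klF C i j = k := klF_unique C hb
    exact (mem_bOfL (F := qlOf C)).2 ⟨i, j, by rw [← this]; rfl⟩

lemma covKl_right (F : QL) : qlOf (covKl (l := l) F) = F := by
  apply Subtype.ext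
  funext i j
  show klF (covKl F) i j = F.1 i j
  exact klF_unique _ (mem_bOfL.2 ⟨i, j, rfl⟩)

noncomputable def covKlEquiv : Cov (kl l) ≃ QL where
  toFun := qlOf
  invFun := covKl
  left_inv := covKl_left
  right_inv := covKl_right

end CompL

section CountQL

abbrev B4 : Type := {f : Fin 4 → Fin 4 // ∀ i j, f i = f j → i = j}
abbrev B40 : Type := {f : Fin 4 → Fin 4 // (∀ i j, f i = f j → i = j) ∧ f 0 = 0}

def QL1 : Type := {F : Fin 4 → Fin 4 → Fin 4 //
  (∀ i, Function.Injective (F i)) ∧ (∀ j, Function.Injective (fun i => F i j)) ∧ F 0 = id}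

def QL2 : Type := {F : Fin 4 → Fin 4 → Fin 4 //
  (∀ i, Function.Injective (F i)) ∧ (∀ j, Function.Injective (fun i => F i j)) ∧
  F 0 = id ∧ ∀ i, F i 0 = i}

abbrev D1 : Type := {f : Fin 4 → Fin 4 //
  (∀ i j, f i = f j → i = j) ∧ f 0 = 1 ∧ ∀ j, f j ≠ j}
abbrev D2 : Type := {f : Fin 4 → Fin 4 //
  (∀ i j, f i = f j → i = j) ∧ f 0 = 2 ∧ ∀ j, f j ≠ j}
abbrev DD : Type := {ab : D1 × D2 // ∀ j, ab.1.1 j ≠ ab.2.1 j}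

noncomputable def qlStep1 : QL ≃ B4 × QL1 where
  toFun F :=
    let e := Equiv.ofBijective (F.1 0) (Finite.injective_iff_bijective.1 (F.2.1 0))
    ⟨⟨F.1 0, fun i j h => F.2.1 0 h⟩,
     ⟨fun i j => F.1 i (e.symm j),
      fun i j j' h => e.symm.injective (F.2.1 i h),
      fun j i i' h => F.2.2.1 (e.symm j) h,
      funext fun j => e.apply_symm_apply j⟩⟩
  invFun sG :=
    ⟨fun i j => sG.2.1 i (sG.1.1 j), by
      obtain ⟨⟨s, hs⟩, ⟨G, hG1, hG2, hG3⟩⟩ := sG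
      refine ⟨fun i j j' h => hs _ _ (hG1 i h), fun j i i' h => hG2 (s j) h, ?_, ?_⟩
      · intro i k
        obtain ⟨t, ht⟩ := (Finite.injective_iff_surjective.1 (hG1 i)) k
        obtain ⟨j, hj⟩ := (Finite.injective_iff_surjective.1 (fun a b h => hs a b h)) t
        exact ⟨j, by show G i (s j) = k; rw [hj, ht]⟩
      · intro j k
        obtain ⟨i, hi⟩ := (Finite.injective_iff_surjective.1 (hG2 (s j))) k
        exact ⟨i, show G i (s j) = k from hi⟩⟩
  left_inv F := by
    apply Subtype.ext
    funext i j
    show F.1 i (_ : Fin 4) = F.1 i j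
    apply congrArg
    exact Equiv.symm_apply_apply _ j
  right_inv sG := by
    obtain ⟨⟨s, hs⟩, ⟨G, hG1, hG2, hG3⟩⟩ := sG
    have hid : ∀ x, G 0 (s x) = s x := fun x => congrFun hG3 (s x)
    apply Prod.ext
    · apply Subtype.ext
      funext j
      exact hid j
    · apply Subtype.ext
      funext i j
      show G i (s _) = G i j
      apply congrArg
      set e' := Equiv.ofBijective (fun j => G 0 (s j))
        (Finite.injective_iff_bijective.1 (fun a b h => hs _ _ (hG1 0 h))) with he'
      have hx : ∀ x, e' x = s x := fun x => hid x
      have := e'.apply_symm_apply j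
      rw [hx (e'.symm j)] at this
      exact this

noncomputable def qlStep2 : QL1 ≃ B40 × QL2 where
  toFun F :=
    let e := Equiv.ofBijective (fun i => F.1 i 0)
      (Finite.injective_iff_bijective.1 (fun a b h => F.2.2.1 0 h))
    ⟨⟨fun i => F.1 i 0, fun i j h => F.2.2.1 0 h, congrFun F.2.2.2 0⟩,
     ⟨fun i j => F.1 (e.symm i) j,
      by
        refine ⟨fun i => F.2.1 (e.symm i), fun j i i' h => e.symm.injective (F.2.2.1 j h),
          ?_, fun i => e.apply_symm_apply i⟩
        have h0 : e 0 = 0 := congrFun F.2.2.2 0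
        have hsymm0 : e.symm 0 = (0 : Fin 4) := by
          apply e.injective
          rw [e.apply_symm_apply, h0]
        funext j
        show F.1 (e.symm 0) j = j
        rw [hsymm0]
        exact congrFun F.2.2.2 j⟩⟩
  invFun sG :=
    ⟨fun i j => sG.2.1 (sG.1.1 i) j, by
      obtain ⟨⟨s, hs, hs0⟩, ⟨G, hG1, hG2, hG3, hG4⟩⟩ := sG
      refine ⟨fun i => hG1 (s i), fun j i i' h => hs _ _ (hG2 j h), ?_⟩
      funext j
      show G (s 0) j = j
      rw [hs0]
      exact congrFun hG3 j⟩
  left_inv F := by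
    apply Subtype.ext
    funext i j
    show F.1 (_ : Fin 4) j = F.1 i j
    apply congrArg (fun t => F.1 t j)
    exact Equiv.symm_apply_apply _ i
  right_inv sG := by
    obtain ⟨⟨s, hs, hs0⟩, ⟨G, hG1, hG2, hG3, hG4⟩⟩ := sG
    have hid : ∀ x, G (s x) 0 = s x := fun x => hG4 (s x)
    apply Prod.ext
    · apply Subtype.ext
      funext i
      exact hid i
    · apply Subtype.ext
      funext i j
      show G (s _) j = G i j
      apply congrArg (fun t => G t j)
      set e' := Equiv.ofBijective (fun i => G (s i) 0)
        (Finite.injective_iff_bijective.1 (fun a b h => hs _ _ (hG2 0 h))) with he'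
      have hx : ∀ x, e' x = s x := fun x => hid x
      have := e'.apply_symm_apply i
      rw [hx (e'.symm i)] at this
      exact this

lemma fin4cases : ∀ i : Fin 4, i = 0 ∨ i = 1 ∨ i = 2 ∨ i = 3 := by decide

lemma key1 : ∀ x y z : Fin 4, x ≠ y → x ≠ z → y ≠ z →
    (2 - x - y - z ≠ x ∧ 2 - x - y - z ≠ y ∧ 2 - x - y - z ≠ z) := by decide

lemma key2 : ∀ x y z w w' : Fin 4, x ≠ y → x ≠ z → y ≠ z →
    w ≠ x → w ≠ y → w ≠ z → w' ≠ x → w' ≠ y → w' ≠ z → w = w' := by decide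

/-- the reconstructed square from rows 1 and 2 -/
noncomputable def dRec (ab : DD) : Fin 4 → Fin 4 → Fin 4 := fun i =>
  if i = 0 then id
  else if i = 1 then ab.1.1.1
  else if i = 2 then ab.1.2.1
  else fun j => 2 - j - ab.1.1.1 j - ab.1.2.1 j

lemma dRec0 (ab : DD) : dRec ab 0 = id := rfl
lemma dRec1 (ab : DD) : dRec ab 1 = ab.1.1.1 := rfl
lemma dRec2 (ab : DD) : dRec ab 2 = ab.1.2.1 := rfl
lemma dRec3 (ab : DD) : dRec ab 3 = fun j => 2 - j - ab.1.1.1 j - ab.1.2.1 j := rfl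

noncomputable def qlStep3 : QL2 ≃ DD where
  toFun F := ⟨(⟨F.1 1, fun i j h => F.2.1 1 h, F.2.2.2.2 1, fun j h => by
      have : F.1 1 j = F.1 0 j := by rw [h, F.2.2.2.1]; rfl
      exact (by decide : (1 : Fin 4) ≠ 0) (F.2.2.1 j this)⟩,
    ⟨F.1 2, fun i j h => F.2.1 2 h, F.2.2.2.2 2, fun j h => by
      have : F.1 2 j = F.1 0 j := by rw [h, F.2.2.2.1]; rfl
      exact (by decide : (2 : Fin 4) ≠ 0) (F.2.2.1 j this)⟩),
    fun j h => (by decide : (1 : Fin 4) ≠ 2) (F.2.2.1 j h)⟩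
  invFun ab := ⟨dRec ab, by
    obtain ⟨⟨⟨a, ha, ha0, haf⟩, ⟨b, hb, hb0, hbf⟩⟩, hab⟩ := ab
    have hr3 := fun j => key1 j (a j) (b j) (fun h => haf j h.symm)
      (fun h => hbf j h.symm) (hab j)
    refine ⟨?_, ?_, rfl, ?_⟩
    · intro i
      rcases fin4cases i with rfl | rfl | rfl | rfl
      · exact fun u v h => h
      · exact fun u v h => ha u v h
      · exact fun u v h => hb u v h
      · -- third row injective
        intro u v h
        simp only [dRec1, dRec2, dRec3] at h
        have hu := hr3 u
        have hv := hr3 v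
        set w := 2 - u - a u - b u with hw
        rw [← h] at hv
        -- u and v are both the unique index not hit ... use inverses
        have hab' : Function.Bijective a := Finite.injective_iff_bijective.1
          (fun s t hh => ha s t hh)
        have hbb' : Function.Bijective b := Finite.injective_iff_bijective.1
          (fun s t hh => hb s t hh)
        set ea := Equiv.ofBijective a hab'
        set eb := Equiv.ofBijective b hbb'
        have haa : ∀ x, a (ea.symm x) = x := fun x => ea.apply_symm_apply x
        have hbbx : ∀ x, b (eb.symm x) = x := fun x => eb.apply_symm_apply x
        have hwa : w ≠ ea.symm w := fun hh => haf w ((congrArg a hh).trans (haa w))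
        have hwb : w ≠ eb.symm w := fun hh => hbf w ((congrArg b hh).trans (hbbx w))
        have hane : ea.symm w ≠ eb.symm w := fun hh =>
          hab (ea.symm w) ((haa w).trans (((congrArg b hh).trans (hbbx w)).symm))
        have hu1 : u ≠ w := fun hh => hu.1 hh.symm
        have hu2 : u ≠ ea.symm w := fun hh =>
          hu.2.1 (((congrArg a hh).trans (haa w)).symm)
        have hu3 : u ≠ eb.symm w := fun hh =>
          hu.2.2 (((congrArg b hh).trans (hbbx w)).symm)
        have hv1 : v ≠ w := fun hh => hv.1 hh.symm
        have hv2 : v ≠ ea.symm w := fun hh =>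
          hv.2.1 (((congrArg a hh).trans (haa w)).symm)
        have hv3 : v ≠ eb.symm w := fun hh =>
          hv.2.2 (((congrArg b hh).trans (hbbx w)).symm)
        exact key2 w (ea.symm w) (eb.symm w) u v hwa hwb hane hu1 hu2 hu3 hv1 hv2 hv3
    · intro j i i' h
      simp only at h
      have n1 : j ≠ a j := fun hh => haf j hh.symm
      have n2 : j ≠ b j := fun hh => hbf j hh.symm
      have n3 : a j ≠ b j := hab j
      have hr := hr3 j
      rcases fin4cases i with rfl | rfl | rfl | rfl <;>
        rcases fin4cases i' with rfl | rfl | rfl | rfl <;>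
        simp only [show ∀ ab : DD, dRec ab 0 = id from fun _ => rfl,
          show (dRec (⟨(⟨a, ha, ha0, haf⟩, ⟨b, hb, hb0, hbf⟩), hab⟩ : DD) 1) = a from rfl,
          show (dRec (⟨(⟨a, ha, ha0, haf⟩, ⟨b, hb, hb0, hbf⟩), hab⟩ : DD) 2) = b from rfl,
          show (dRec (⟨(⟨a, ha, ha0, haf⟩, ⟨b, hb, hb0, hbf⟩), hab⟩ : DD) 3) =
            fun j => 2 - j - a j - b j from rfl, id_eq] at h <;>
        first
          | rfl
          | exact absurd h n1
          | exact absurd h n2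
          | exact absurd h n3
          | exact absurd h.symm n1
          | exact absurd h.symm n2
          | exact absurd h.symm n3
          | exact absurd h.symm hr.1
          | exact absurd h.symm hr.2.1
          | exact absurd h.symm hr.2.2
          | exact absurd h hr.1
          | exact absurd h hr.2.1
          | exact absurd h hr.2.2
    · intro i
      rcases fin4cases i with rfl | rfl | rfl | rfl
      · rfl
      · exact ha0
      · exact hb0
      · show 2 - 0 - a 0 - b 0 = 3
        rw [ha0, hb0]
        decide⟩
  left_inv F := by
    obtain ⟨F, hrow, hcol, h0, hc0⟩ := F
    apply Subtype.ext
    funext i j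
    show dRec _ i j = F i j
    rcases fin4cases i with rfl | rfl | rfl | rfl
    · show id j = F 0 j
      rw [h0]
    · rfl
    · rfl
    · -- uniqueness of missing element
      show 2 - j - F 1 j - F 2 j = F 3 j
      have n1 : j ≠ F 1 j := by
        intro hh
        have : F 1 j = F 0 j := by rw [← hh, h0]; rfl
        exact (by decide : (1 : Fin 4) ≠ 0) (hcol j this)
      have n2 : j ≠ F 2 j := by
        intro hh
        have : F 2 j = F 0 j := by rw [← hh, h0]; rfl
        exact (by decide : (2 : Fin 4) ≠ 0) (hcol j this)
      have n3 : F 1 j ≠ F 2 j := fun hh => (by decide : (1 : Fin 4) ≠ 2) (hcol j hh)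
      have hr := key1 j (F 1 j) (F 2 j) n1 n2 n3
      have m1 : F 3 j ≠ j := by
        intro hh
        have : F 3 j = F 0 j := by rw [hh, h0]; rfl
        exact (by decide : (3 : Fin 4) ≠ 0) (hcol j this)
      have m2 : F 3 j ≠ F 1 j := fun hh => (by decide : (3 : Fin 4) ≠ 1) (hcol j hh)
      have m3 : F 3 j ≠ F 2 j := fun hh => (by decide : (3 : Fin 4) ≠ 2) (hcol j hh)
      exact key2 j (F 1 j) (F 2 j) _ _ n1 n2 n3 hr.1 hr.2.1 hr.2.2 m1 m2 m3
  right_inv ab := by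
    apply Subtype.ext
    apply Prod.ext <;> apply Subtype.ext <;> rfl

lemma cardB4 : Nat.card B4 = 24 := by
  rw [Nat.card_eq_fintype_card]
  decide

lemma cardB40 : Nat.card B40 = 6 := by
  rw [Nat.card_eq_fintype_card]
  decide

lemma cardDD : Nat.card DD = 4 := by
  rw [Nat.card_eq_fintype_card]
  decide

lemma card_QL : Nat.card QL = 576 := by
  rw [Nat.card_congr qlStep1, Nat.card_prod, cardB4,
    Nat.card_congr qlStep2, Nat.card_prod, cardB40,
    Nat.card_congr qlStep3, cardDD]

lemma card_cov_kl {m : ℕ} (l : Ltt m) : Nat.card (Cov (kl l)) = 576 := by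
  rw [Nat.card_congr (covKlEquiv (l := l)), card_QL]

end CountQL

section Main

lemma main (m : ℕ) (hm : 1 ≤ m) :
    Nat.card (SetSTS m) =
      6 ^ (2 ^ m - 1) * 576 ^ ((2 ^ m - 1) * (2 ^ (m - 1) - 1) / 3) := by
  rw [Nat.card_congr (globalEquiv (m := m)), Nat.card_pi]
  rw [Fintype.prod_sum_type]
  rw [Fintype.prod_sum_type]
  have h0 : (∏ u : Unit, Nat.card (Cov (Sum.inl u : Kc m))) = 1 := by
    have hc : ∀ u ∈ Finset.univ, Nat.card (Cov (Sum.inl u : Kc m)) = 1 := by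
      rintro ⟨⟩ -
      exact card_cov_k0
    rw [Finset.prod_congr rfl hc, Finset.prod_const, one_pow]
  have hp : (∏ p : Pt m, Nat.card (Cov (Sum.inr (Sum.inl p) : Kc m)))
      = 6 ^ (2 ^ m - 1) := by
    have hc : ∀ p ∈ Finset.univ, Nat.card (Cov (Sum.inr (Sum.inl p) : Kc m)) = 6 :=
      fun p _ => card_cov_kp p
    rw [Finset.prod_congr rfl hc, Finset.prod_const, Finset.card_univ, card_Pt]
  have hl : (∏ l : Ltt m, Nat.card (Cov (Sum.inr (Sum.inr l) : Kc m)))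
      = 576 ^ ((2 ^ m - 1) * (2 ^ (m - 1) - 1) / 3) := by
    have hc : ∀ l ∈ Finset.univ, Nat.card (Cov (Sum.inr (Sum.inr l) : Kc m)) = 576 :=
      fun l _ => card_cov_kl l
    rw [Finset.prod_congr rfl hc, Finset.prod_const, Finset.card_univ,
      ← Nat.card_eq_fintype_card, card_Ltt hm]
  rw [h0, hp, hl, one_mul]

end Main

end S9

theorem stmt9 (n : ℕ) (hn : 3 ≤ n) :
    Nat.card {B : Finset (Finset (binIdx n 2)) //
        isSTS B ∧ ∀ b ∈ B, ∑ j ∈ b, binCol j = 0} =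
      6 ^ (2 ^ (n - 2) - 1) * 576 ^ ((2 ^ (n - 2) - 1) * (2 ^ (n - 3) - 1) / 3) := by
  exact S9.main (n - 2) (by omega)
end
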